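/- arXiv:2307.15235 — 3 statements merged into one kernel-verified Lean document; each statement's English description precedes it below -/
import Mathlib

section
/- Let d ≥ 1 and let Ω ⊂ ℝ^d be a bounded open set. There exists a constant C ≥ 1 depending only on Ω and Λ such that for every s ∈ (0,1) and every x outside the closure of Ω, one has -N_s(d^s)(x) ≤ (C/s) τ_s(x), where d^s denotes the function y ↦ dist(y,∂Ω)^s on ℝ^d. -/
open MeasureTheory Metric Set Filter
open scoped ENNReal NNReal Topology

noncomputable section

/-- Euclidean space `ℝ^d`. -/
abbrev Euc (d : ℕ) : Type := EuclideanSpace ℝ (Fin d)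

/-- The unit sphere `𝕊^{d-1} ⊆ ℝ^d`, as a type. -/
abbrev Sph (d : ℕ) : Type := Metric.sphere (0 : Euc d) 1

/-- Distance to the boundary of `Ω`: `d_x = dist (x, ∂Ω)`. -/
def distBdry {d : ℕ} (Ω : Set (Euc d)) (x : Euc d) : ℝ :=
  Metric.infDist x (frontier Ω)

/-- `Ω ⊆ ℝ^d` is a bounded `C^{1,α}` domain: it is open and bounded, and its boundary is
locally the graph of a `C^{1,α}` function (with uniform bounds) after a rigid motion. -/
def IsC1Domain {d : ℕ} (Ω : Set (Euc d)) (α : ℝ) : Prop :=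
  IsOpen Ω ∧ Bornology.IsBounded Ω ∧
  ∃ hd : 0 < d, ∃ r₀ : ℝ, 0 < r₀ ∧ ∃ L : ℝ, 1 ≤ L ∧
    ∀ z ∈ frontier Ω, ∃ T : Euc d ≃ᵢ Euc d, T z = 0 ∧
      ∃ φ : Euc (d - 1) → ℝ, ContDiff ℝ 1 φ ∧
        (∀ a, |φ a| ≤ L) ∧ (∀ a, ‖fderiv ℝ φ a‖ ≤ L) ∧
        (∀ a b, ‖fderiv ℝ φ a - fderiv ℝ φ b‖ ≤ L * ‖a - b‖ ^ α) ∧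
        T '' (Ω ∩ Metric.ball z r₀) =
          {y : Euc d | y ∈ Metric.ball (0 : Euc d) r₀ ∧
            y ⟨d - 1, Nat.sub_lt hd Nat.one_pos⟩ <
              φ ((WithLp.equiv 2 (∀ _ : Fin (d - 1), ℝ)).symm
                fun i => y (Fin.castLE (Nat.sub_le d 1) i))}

/-- `Ω ⊆ ℝ^d` is a bounded Lipschitz domain. -/
def IsLipschitzDomain {d : ℕ} (Ω : Set (Euc d)) : Prop :=
  IsOpen Ω ∧ Bornology.IsBounded Ω ∧
  ∃ hd : 0 < d, ∃ r₀ : ℝ, 0 < r₀ ∧ ∃ L : ℝ, 1 ≤ L ∧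
    ∀ z ∈ frontier Ω, ∃ T : Euc d ≃ᵢ Euc d, T z = 0 ∧
      ∃ φ : Euc (d - 1) → ℝ,
        (∀ a b, |φ a - φ b| ≤ L * ‖a - b‖) ∧
        T '' (Ω ∩ Metric.ball z r₀) =
          {y : Euc d | y ∈ Metric.ball (0 : Euc d) r₀ ∧
            y ⟨d - 1, Nat.sub_lt hd Nat.one_pos⟩ <
              φ ((WithLp.equiv 2 (∀ _ : Fin (d - 1), ℝ)).symm
                fun i => y (Fin.castLE (Nat.sub_le d 1) i))}

/-- The tail weight `ν_s^⋆(x) = (1-s) ∫_ℝ ∫_{𝕊^{d-1}} 1_Ω(x+rθ) (1+|r|)^{-1-2s} μ(dθ) dr`. -/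
def nuStar {d : ℕ} (Ω : Set (Euc d)) (μ : Measure (Sph d)) (s : ℝ) (x : Euc d) : ℝ :=
  (1 - s) * ∫ r : ℝ, ∫ θ : Sph d,
    Ω.indicator (fun _ => (1 : ℝ)) (x + r • (θ : Euc d)) * (1 + |r|) ^ (-1 - 2 * s) ∂μ

/-- The weight `τ_s(x) = (1-s) d_x^{-s} 1_{Ω¹ ∩ supp ν_s^⋆}(x) + ν_s^⋆(x)`, where
`Ω¹ = {x ∈ Ω^c : d_x < 1}`. -/
def tauWt {d : ℕ} (Ω : Set (Euc d)) (μ : Measure (Sph d)) (s : ℝ) (x : Euc d) : ℝ :=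
  (1 - s) * distBdry Ω x ^ (-s) *
    ({y | y ∈ Ωᶜ ∧ distBdry Ω y < 1} ∩
      closure (Function.support (nuStar Ω μ s))).indicator (fun _ => (1 : ℝ)) x
  + nuStar Ω μ s x

/-- The nonlocal normal derivative
`N_s(φ)(x) = (1-s) ∫_ℝ ∫_{𝕊^{d-1}} 1_Ω(x+rθ) (φ(x)-φ(x+rθ)) |r|^{-1-2s} μ(dθ) dr`. -/
def Ns {d : ℕ} (Ω : Set (Euc d)) (μ : Measure (Sph d)) (s : ℝ) (φ : Euc d → ℝ)
    (x : Euc d) : ℝ :=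
  (1 - s) * ∫ r : ℝ, ∫ θ : Sph d,
    Ω.indicator (fun _ => (1 : ℝ)) (x + r • (θ : Euc d))
      * (φ x - φ (x + r • (θ : Euc d))) * |r| ^ (-1 - 2 * s) ∂μ

/-- The (second-difference) kernel of the operator `A_s` at `x`. -/
def asKernel {d : ℕ} (s : ℝ) (u : Euc d → ℝ) (x : Euc d) (p : ℝ × Sph d) : ℝ :=
  (u (x + p.1 • (p.2 : Euc d)) + u (x - p.1 • (p.2 : Euc d)) - 2 * u x) * |p.1| ^ (-1 - 2 * s)

/-- The integral defining `A_s u (x)` converges absolutely. -/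
def AsIntegrable {d : ℕ} (μ : Measure (Sph d)) (s : ℝ) (u : Euc d → ℝ) (x : Euc d) : Prop :=
  Integrable (asKernel s u x) ((volume : Measure ℝ).prod μ)

/-- The operator
`A_s u (x) = -(1-s)/2 ∫_ℝ ∫_{𝕊^{d-1}} (u(x+rθ)+u(x-rθ)-2u(x)) |r|^{-1-2s} μ(dθ) dr`. -/
def As {d : ℕ} (μ : Measure (Sph d)) (s : ℝ) (u : Euc d → ℝ) (x : Euc d) : ℝ :=
  (-(1 - s) / 2) * ∫ p, asKernel s u x p ∂((volume : Measure ℝ).prod μ)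

/-- The carré du champ
`Γ_s(u)(x) = (1-s) ∫_ℝ ∫_{𝕊^{d-1}} (u(x)-u(x+rθ))² |r|^{-1-2s} μ(dθ) dr`, valued in `[0,∞]`. -/
def carre {d : ℕ} (μ : Measure (Sph d)) (s : ℝ) (u : Euc d → ℝ) (x : Euc d) : ℝ≥0∞ :=
  ENNReal.ofReal (1 - s) * ∫⁻ r : ℝ, ∫⁻ θ : Sph d,
    ENNReal.ofReal ((u x - u (x + r • (θ : Euc d))) ^ 2 * |r| ^ (-1 - 2 * s)) ∂μ

/-- `u` is a distributional solution of `A_s u = f` in `Ω`, `u = g` on `Ω^c`. -/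
def IsDistributionalSolution {d : ℕ} (Ω : Set (Euc d)) (μ : Measure (Sph d)) (s : ℝ)
    (f g u : Euc d → ℝ) : Prop :=
  Measurable u ∧
  (∫⁻ x, ENNReal.ofReal (|u x| * nuStar Ω μ s x)) < ⊤ ∧
  (∀ᵐ x ∂(volume.restrict Ωᶜ), u x = g x) ∧
  ∀ η : Euc d → ℝ, ContDiff ℝ (⊤ : ℕ∞) η → HasCompactSupport η → tsupport η ⊆ Ω →
    ∫ x, u x * As μ s η x = ∫ x in Ω, f x * η x

/-- `u` is a classical solution of `A_s u = f` in `Ω`, `u = g` on `Ω^c`: it is `s`-Hölder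
continuous on `ℝ^d`, equals `g` on `Ω^c`, and the integral defining `A_s u` converges
absolutely at every point of `Ω` with value `f`. -/
def IsClassicalSolution {d : ℕ} (Ω : Set (Euc d)) (μ : Measure (Sph d)) (s : ℝ)
    (f g u : Euc d → ℝ) : Prop :=
  (∃ K : ℝ, ∀ x y, |u x - u y| ≤ K * ‖x - y‖ ^ s) ∧
  (∀ x ∈ Ωᶜ, u x = g x) ∧
  ∀ x ∈ Ω, AsIntegrable μ s u x ∧ As μ s u x = f x

/-- The squared `H^{s/2}(Ω)` norm
`‖u‖² = ∫_Ω u² dx + (1-s/2) ∫_Ω ∫_Ω (u(x)-u(y))² |x-y|^{-(d+s)} dy dx`, valued in `[0,∞]`. -/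
def sobNormSq {d : ℕ} (Ω : Set (Euc d)) (s : ℝ) (u : Euc d → ℝ) : ℝ≥0∞ :=
  (∫⁻ x in Ω, ENNReal.ofReal (u x ^ 2))
  + ENNReal.ofReal (1 - s / 2) *
      ∫⁻ x in Ω, ∫⁻ y in Ω, ENNReal.ofReal ((u x - u y) ^ 2 * ‖x - y‖ ^ (-((d : ℝ) + s)))

set_option maxHeartbeats 1000000 in
/-- Lemma 2.1: `-N_s(d^s)(x) ≤ (C/s) τ_s(x)` outside `closure Ω`,
with `C` depending only on `Ω` and `Λ`. -/
theorem statement1 {d : ℕ} (hd : 1 ≤ d) (Ω : Set (Euc d)) (hΩo : IsOpen Ω)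
    (hΩb : Bornology.IsBounded Ω) (μ : Measure (Sph d)) (Λ : ℝ) (hΛ : 0 < Λ)
    (hμfin : μ Set.univ ≤ ENNReal.ofReal Λ) :
    ∃ C : ℝ, 1 ≤ C ∧ ∀ s ∈ Set.Ioo (0 : ℝ) 1, ∀ x ∉ closure Ω,
      -Ns Ω μ s (fun y => distBdry Ω y ^ s) x ≤ C / s * tauWt Ω μ s x := by
  classical
  haveI hfin : IsFiniteMeasure μ := ⟨lt_of_le_of_lt hμfin ENNReal.ofReal_lt_top⟩
  obtain ⟨R₀, hR₀⟩ := (Metric.isBounded_iff_subset_closedBall (0 : Euc d)).1 hΩb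
  set R : ℝ := max R₀ 1 + 1 with hRdef
  have hR1 : 1 ≤ R := by
    have := le_max_right R₀ 1; simp only [hRdef]; linarith
  have hRΩ : Ω ⊆ Metric.ball 0 R := by
    intro y hy
    have h1 : dist y 0 ≤ R₀ := hR₀ hy
    have h2 := le_max_left R₀ 1
    rw [Metric.mem_ball]
    simp only [hRdef]; linarith
  set D : ℝ := 2 * R with hDdef
  have hD1 : 1 ≤ D := by simp only [hDdef]; linarith
  have hD0 : 0 < D := by linarith
  set C : ℝ := max (2 * Λ) (8 * D) with hCdef
  have hC2Λ : 2 * Λ ≤ C := le_max_left _ _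
  have hC8D : 8 * D ≤ C := le_max_right _ _
  have hC1 : 1 ≤ C := le_trans (by linarith) hC8D
  refine ⟨C, hC1, ?_⟩
  rintro s ⟨hs0, hs1⟩ x hx
  have h1s : 0 < 1 - s := by linarith
  rcases Set.eq_empty_or_nonempty Ω with rfl | hΩne
  · have hnu : nuStar (∅ : Set (Euc d)) μ s = fun _ => (0 : ℝ) := by
      funext y; simp [nuStar]
    have hNs0 : Ns (∅ : Set (Euc d)) μ s (fun y => distBdry ∅ y ^ s) x = 0 := by
      simp [Ns]
    rw [hNs0, tauWt, hnu, neg_zero]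
    have hsupp : Function.support (fun _ : Euc d => (0 : ℝ)) = ∅ := Function.support_zero
    rw [hsupp]
    simp
  -- main case
  have hΩuniv : Ω ≠ Set.univ := by
    intro h
    have hmem : (EuclideanSpace.single (⟨0, hd⟩ : Fin d) (R : ℝ)) ∈ Metric.ball (0 : Euc d) R :=
      hRΩ (h ▸ Set.mem_univ _)
    rw [Metric.mem_ball, dist_zero_right, EuclideanSpace.norm_single] at hmem
    rw [Real.norm_eq_abs, abs_of_nonneg (by linarith : (0:ℝ) ≤ R)] at hmem
    exact lt_irrefl _ hmem
  have hfrne : (frontier Ω).Nonempty := nonempty_frontier_iff.2 ⟨hΩne, hΩuniv⟩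
  have hxcl : x ∉ Ω := fun h => hx (subset_closure h)
  have hfr_sub : frontier Ω ⊆ Metric.closedBall 0 R := by
    intro z hz
    have h1 : z ∈ closure Ω := frontier_subset_closure hz
    have h2 : z ∈ closure (Metric.ball (0 : Euc d) R) := closure_mono hRΩ h1
    exact closure_ball_subset_closedBall h2
  set δ : ℝ := distBdry Ω x with hδdef
  have hδpos : 0 < δ := by
    rw [hδdef, distBdry]
    refine (isClosed_frontier.notMem_iff_infDist_pos hfrne).1 ?_
    exact fun h => hx (frontier_subset_closure h)
  have hδle : ∀ y ∈ Ω, δ ≤ dist x y := by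
    have hxc : x ∈ (closure Ω)ᶜ := hx
    have hcne : (closure Ω)ᶜ ≠ Set.univ := by
      intro h
      obtain ⟨y, hy⟩ := hΩne
      have hy2 : y ∈ (closure Ω)ᶜ := h ▸ Set.mem_univ y
      exact hy2 (subset_closure hy)
    obtain ⟨z, hzf, hzd⟩ := exists_mem_frontier_infDist_compl_eq_dist hxc hcne
    rw [compl_compl] at hzd
    have hzfr : z ∈ frontier Ω := by
      rw [frontier_compl] at hzf
      exact frontier_closure_subset hzf
    intro y hy
    calc δ ≤ dist x z := Metric.infDist_le_dist_of_mem hzfr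
    _ = Metric.infDist x (closure Ω) := hzd.symm
    _ ≤ dist x y := Metric.infDist_le_dist_of_mem (subset_closure hy)
  have hdy : ∀ y ∈ Ω, distBdry Ω y ≤ dist y x ∧ distBdry Ω y ≤ D := by
    intro y hy
    obtain ⟨z, hzf, hzd⟩ := exists_mem_frontier_infDist_compl_eq_dist hy hΩuniv
    have h1 : distBdry Ω y ≤ dist y z := Metric.infDist_le_dist_of_mem hzf
    constructor
    · calc distBdry Ω y ≤ dist y z := h1
      _ = Metric.infDist y Ωᶜ := hzd.symm
      _ ≤ dist y x := Metric.infDist_le_dist_of_mem hxcl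
    · have hyR : ‖y‖ < R := by
        have := hRΩ hy; rwa [Metric.mem_ball, dist_zero_right] at this
      have hzR : ‖z‖ ≤ R := by
        have := hfr_sub hzf; rwa [Metric.mem_closedBall, dist_zero_right] at this
      calc distBdry Ω y ≤ dist y z := h1
      _ = ‖y - z‖ := dist_eq_norm y z
      _ ≤ ‖y‖ + ‖z‖ := norm_sub_le y z
      _ ≤ D := by simp only [hDdef]; linarith
  set B : ℝ := ‖x‖ + R with hBdef
  have hB0 : 0 < B := by positivity
  have hind01 : ∀ y : Euc d, 0 ≤ Ω.indicator (fun _ => (1:ℝ)) y ∧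
      Ω.indicator (fun _ => (1:ℝ)) y ≤ 1 := by
    intro y; by_cases h : y ∈ Ω <;> simp [h]
  have hcont : Continuous fun p : ℝ × Sph d => x + p.1 • (p.2 : Euc d) :=
    continuous_const.add (continuous_fst.smul (continuous_subtype_val.comp continuous_snd))
  have hindP : Measurable fun p : ℝ × Sph d =>
      Ω.indicator (fun _ => (1:ℝ)) (x + p.1 • (p.2 : Euc d)) :=
    (measurable_const.indicator hΩo.measurableSet).comp hcont.measurable
  have hint_ind : ∀ r : ℝ,
      Integrable (fun θ : Sph d => Ω.indicator (fun _ => (1:ℝ)) (x + r • (θ : Euc d))) μ := by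
    intro r
    have hm : Measurable fun θ : Sph d => Ω.indicator (fun _ => (1:ℝ)) (x + r • (θ : Euc d)) :=
      hindP.comp (measurable_const.prodMk measurable_id)
    refine (integrable_const (1:ℝ)).mono' hm.aestronglyMeasurable
      (Filter.Eventually.of_forall fun θ => ?_)
    rw [Real.norm_eq_abs, abs_of_nonneg (hind01 _).1]
    exact (hind01 _).2
  set m : ℝ → ℝ := fun r => ∫ θ : Sph d, Ω.indicator (fun _ => (1:ℝ)) (x + r • (θ : Euc d)) ∂μ
    with hmdef
  have hm_meas : StronglyMeasurable m := hindP.stronglyMeasurable.integral_prod_right'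
  have hm_nonneg : ∀ r, 0 ≤ m r := fun r => integral_nonneg fun θ => (hind01 _).1
  have hμΛ : (μ Set.univ).toReal ≤ Λ := ENNReal.toReal_le_of_le_ofReal hΛ.le hμfin
  have hm_le : ∀ r, m r ≤ Λ := by
    intro r
    calc m r ≤ ∫ _ : Sph d, (1:ℝ) ∂μ :=
        integral_mono (hint_ind r) (integrable_const 1) fun θ => (hind01 _).2
    _ = (μ Set.univ).toReal := by simp [Measure.real]
    _ ≤ Λ := hμΛ
  have hm_supp : ∀ r : ℝ, m r ≠ 0 → δ ≤ |r| ∧ |r| ≤ B := by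
    intro r hr
    have hex : ∃ θ : Sph d, x + r • (θ : Euc d) ∈ Ω := by
      by_contra h
      push_neg at h
      refine hr ?_
      have hz : (fun θ : Sph d => Ω.indicator (fun _ => (1:ℝ)) (x + r • (θ : Euc d)))
          = fun _ => 0 := funext fun θ => Set.indicator_of_notMem (h θ) _
      rw [hmdef]
      simp only [hz]
      exact integral_zero _ _
    obtain ⟨θ, hθ⟩ := hex
    have hdist : dist x (x + r • (θ : Euc d)) = |r| := by
      rw [dist_self_add_right, norm_smul, norm_eq_of_mem_sphere θ, mul_one, Real.norm_eq_abs]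
    constructor
    · have := hδle _ hθ; rwa [hdist] at this
    · have hyR : ‖x + r • (θ : Euc d)‖ < R := by
        have := hRΩ hθ; rwa [Metric.mem_ball, dist_zero_right] at this
      have : dist x (x + r • (θ : Euc d)) ≤ ‖x‖ + ‖x + r • (θ : Euc d)‖ := by
        rw [dist_eq_norm]; exact norm_sub_le _ _
      rw [hdist] at this
      simp only [hBdef]; linarith
  set w : ℝ → ℝ := fun r => |r| ^ (-1 - 2*s) with hwdef
  have hw_nonneg : ∀ r, 0 ≤ w r := fun r => Real.rpow_nonneg (abs_nonneg r) _
  have hmin_nonneg : ∀ r : ℝ, (0:ℝ) ≤ min |r| D := fun r => le_min (abs_nonneg r) hD0.le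
  have hminD : ∀ r : ℝ, min |r| D ^ s ≤ D := by
    intro r
    calc min |r| D ^ s ≤ D ^ s := Real.rpow_le_rpow (hmin_nonneg r) (min_le_right _ _) hs0.le
    _ ≤ D ^ (1:ℝ) := Real.rpow_le_rpow_of_exponent_le hD1 hs1.le
    _ = D := Real.rpow_one D
  set J : ℝ → ℝ := fun r => min |r| D ^ s * w r * m r with hJdef
  have hJ_nonneg : ∀ r, 0 ≤ J r := fun r =>
    mul_nonneg (mul_nonneg (Real.rpow_nonneg (hmin_nonneg r) s) (hw_nonneg r)) (hm_nonneg r)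
  have hφx_nonneg : 0 ≤ distBdry Ω x ^ s := Real.rpow_nonneg Metric.infDist_nonneg s
  have hkey : ∀ (r : ℝ) (θ : Sph d),
      Ω.indicator (fun _ => (1:ℝ)) (x + r • (θ : Euc d)) *
        (distBdry Ω (x + r • (θ : Euc d)) ^ s - distBdry Ω x ^ s) * w r
      ≤ Ω.indicator (fun _ => (1:ℝ)) (x + r • (θ : Euc d)) * (min |r| D ^ s * w r) := by
    intro r θ
    by_cases h : x + r • (θ : Euc d) ∈ Ω
    · rw [Set.indicator_of_mem h, one_mul, one_mul]
      refine mul_le_mul_of_nonneg_right ?_ (hw_nonneg r)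
      have hdy1 : distBdry Ω (x + r • (θ : Euc d)) ≤ |r| := by
        have h1 := (hdy _ h).1
        rwa [dist_comm, dist_self_add_right, norm_smul, norm_eq_of_mem_sphere θ, mul_one,
          Real.norm_eq_abs] at h1
      have hdy2 : distBdry Ω (x + r • (θ : Euc d)) ≤ D := (hdy _ h).2
      have h0 : (0:ℝ) ≤ distBdry Ω (x + r • (θ : Euc d)) := Metric.infDist_nonneg
      have hle : distBdry Ω (x + r • (θ : Euc d)) ^ s ≤ min |r| D ^ s :=
        Real.rpow_le_rpow h0 (le_min hdy1 hdy2) hs0.le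
      linarith
    · rw [Set.indicator_of_notMem h]; simp
  have hIJ : ∀ r : ℝ,
      (∫ θ : Sph d, Ω.indicator (fun _ => (1:ℝ)) (x + r • (θ : Euc d)) *
        (distBdry Ω (x + r • (θ : Euc d)) ^ s - distBdry Ω x ^ s) * w r ∂μ) ≤ J r := by
    intro r
    have hJr : J r = ∫ θ : Sph d,
        Ω.indicator (fun _ => (1:ℝ)) (x + r • (θ : Euc d)) * (min |r| D ^ s * w r) ∂μ := by
      rw [MeasureTheory.integral_mul_const]
      simp only [hJdef, hmdef]
      ring
    rw [hJr]
    by_cases hI : Integrable (fun θ : Sph d =>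
        Ω.indicator (fun _ => (1:ℝ)) (x + r • (θ : Euc d)) *
          (distBdry Ω (x + r • (θ : Euc d)) ^ s - distBdry Ω x ^ s) * w r) μ
    · exact integral_mono hI ((hint_ind r).mul_const _) (hkey r)
    · rw [integral_undef hI]
      exact integral_nonneg fun θ => mul_nonneg (hind01 _).1
        (mul_nonneg (Real.rpow_nonneg (hmin_nonneg r) s) (hw_nonneg r))
  have hJmeas : Measurable J := by
    refine Measurable.mul (Measurable.mul ?_ ?_) hm_meas.measurable
    · fun_prop
    · fun_prop
  have hJbdd : ∀ r, ‖J r‖ ≤ Set.indicator (Set.Icc (-B) B)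
      (fun _ => D * δ ^ (-1 - 2*s) * Λ) r := by
    intro r
    rw [Real.norm_eq_abs, abs_of_nonneg (hJ_nonneg r)]
    by_cases hm0 : m r = 0
    · simp only [hJdef, hm0, mul_zero]
      exact Set.indicator_nonneg (fun _ _ => by positivity) r
    · obtain ⟨h1, h2⟩ := hm_supp r hm0
      have hrB : r ∈ Set.Icc (-B) B := by
        rcases abs_le.1 h2 with ⟨ha, hb⟩; exact ⟨ha, hb⟩
      rw [Set.indicator_of_mem hrB]
      have hwb : w r ≤ δ ^ (-1 - 2*s) := Real.rpow_le_rpow_of_nonpos hδpos h1 (by linarith)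
      calc J r ≤ (D * δ ^ (-1 - 2*s)) * Λ := by
            refine mul_le_mul ?_ (hm_le r) (hm_nonneg r) (by positivity)
            exact mul_le_mul (hminD r) hwb (hw_nonneg r) hD0.le
      _ = D * δ ^ (-1 - 2*s) * Λ := rfl
  have hJint : Integrable J := by
    refine Integrable.mono' ?_ hJmeas.aestronglyMeasurable (Filter.Eventually.of_forall hJbdd)
    exact (integrable_indicator_iff measurableSet_Icc).2
      (integrableOn_const measure_Icc_lt_top.ne enorm_ne_top)
  set n : ℝ → ℝ := fun r => (1 + |r|) ^ (-1 - 2*s) * m r with hndef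
  have hn_nonneg : ∀ r, 0 ≤ n r := fun r =>
    mul_nonneg (Real.rpow_nonneg (by positivity) _) (hm_nonneg r)
  have hn_meas : Measurable n := by
    refine Measurable.mul ?_ hm_meas.measurable
    fun_prop
  have hn_bdd : ∀ r, ‖n r‖ ≤ Set.indicator (Set.Icc (-B) B) (fun _ => Λ) r := by
    intro r
    rw [Real.norm_eq_abs, abs_of_nonneg (hn_nonneg r)]
    by_cases hm0 : m r = 0
    · simp only [hndef, hm0, mul_zero]
      exact Set.indicator_nonneg (fun _ _ => hΛ.le) r
    · obtain ⟨h1, h2⟩ := hm_supp r hm0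
      have hrB : r ∈ Set.Icc (-B) B := by
        rcases abs_le.1 h2 with ⟨ha, hb⟩; exact ⟨ha, hb⟩
      rw [Set.indicator_of_mem hrB]
      have hb1 : (1 + |r|) ^ (-1 - 2*s) ≤ 1 :=
        Real.rpow_le_one_of_one_le_of_nonpos (by linarith [abs_nonneg r]) (by linarith)
      calc n r ≤ 1 * Λ := mul_le_mul hb1 (hm_le r) (hm_nonneg r) zero_le_one
      _ = Λ := one_mul Λ
  have hnint : Integrable n := by
    refine Integrable.mono' ?_ hn_meas.aestronglyMeasurable (Filter.Eventually.of_forall hn_bdd)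
    exact (integrable_indicator_iff measurableSet_Icc).2
      (integrableOn_const measure_Icc_lt_top.ne enorm_ne_top)
  have hnu_eq : nuStar Ω μ s x = (1 - s) * ∫ r : ℝ, n r := by
    rw [nuStar]
    congr 1
    refine integral_congr_ae (Filter.Eventually.of_forall fun r => ?_)
    dsimp only
    rw [MeasureTheory.integral_mul_const]
    simp only [hndef, hmdef]
    ring
  have hν_nonneg : 0 ≤ nuStar Ω μ s x := by
    rw [hnu_eq]; exact mul_nonneg h1s.le (integral_nonneg hn_nonneg)
  have hNs : -Ns Ω μ s (fun y => distBdry Ω y ^ s) x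
      = (1 - s) * ∫ r : ℝ, ∫ θ : Sph d,
          Ω.indicator (fun _ => (1:ℝ)) (x + r • (θ : Euc d)) *
            (distBdry Ω (x + r • (θ : Euc d)) ^ s - distBdry Ω x ^ s) * w r ∂μ := by
    rw [Ns, ← mul_neg, ← MeasureTheory.integral_neg]
    congr 1
    refine integral_congr_ae (Filter.Eventually.of_forall fun r => ?_)
    dsimp only
    rw [← MeasureTheory.integral_neg]
    refine integral_congr_ae (Filter.Eventually.of_forall fun θ => ?_)
    dsimp only
    simp only [hwdef]
    ring
  have hOuter : (∫ r : ℝ, ∫ θ : Sph d,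
      Ω.indicator (fun _ => (1:ℝ)) (x + r • (θ : Euc d)) *
        (distBdry Ω (x + r • (θ : Euc d)) ^ s - distBdry Ω x ^ s) * w r ∂μ)
      ≤ ∫ r : ℝ, J r := by
    by_cases hI : Integrable (fun r : ℝ => ∫ θ : Sph d,
        Ω.indicator (fun _ => (1:ℝ)) (x + r • (θ : Euc d)) *
          (distBdry Ω (x + r • (θ : Euc d)) ^ s - distBdry Ω x ^ s) * w r ∂μ) volume
    · exact integral_mono hI hJint hIJ
    · rw [integral_undef hI]
      exact integral_nonneg hJ_nonneg
  have hsplit : (∫ r : ℝ, J r)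
      = (∫ r in Set.Ioo (-1:ℝ) 1, J r) + ∫ r in (Set.Ioo (-1:ℝ) 1)ᶜ, J r :=
    (integral_add_compl measurableSet_Ioo hJint).symm
  -- bound on the complement
  have hcompl : (∫ r in (Set.Ioo (-1:ℝ) 1)ᶜ, J r) ≤ 8 * D * ∫ r : ℝ, n r := by
    have hpt : ∀ r ∈ (Set.Ioo (-1:ℝ) 1)ᶜ, J r ≤ 8 * D * n r := by
      intro r hr
      have h1r : 1 ≤ |r| := by
        simp only [Set.mem_compl_iff, Set.mem_Ioo, not_and_or, not_lt] at hr
        rcases hr with h | h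
        · rw [abs_of_nonpos (by linarith)]; linarith
        · rw [abs_of_nonneg (by linarith)]; linarith
      have hwn : w r ≤ 8 * (1 + |r|) ^ (-1 - 2*s) := by
        have hp1 : ((2:ℝ) * |r|) ^ (-1 - 2*s) ≤ (1 + |r|) ^ (-1 - 2*s) :=
          Real.rpow_le_rpow_of_nonpos (by linarith) (by linarith) (by linarith)
        have hp2 : ((2:ℝ) * |r|) ^ (-1 - 2*s) = 2 ^ (-1 - 2*s) * |r| ^ (-1 - 2*s) :=
          Real.mul_rpow (by norm_num) (abs_nonneg r)
        have hp3 : (2:ℝ) ^ (1 + 2*s) ≤ 8 := by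
          calc (2:ℝ) ^ (1 + 2*s) ≤ 2 ^ (3:ℝ) :=
              Real.rpow_le_rpow_of_exponent_le one_le_two (by linarith)
          _ = 8 := by
            rw [show (3:ℝ) = ((3:ℕ):ℝ) by norm_num, Real.rpow_natCast]; norm_num
        have hp4 : w r = 2 ^ (1 + 2*s) * (2 ^ (-1 - 2*s) * |r| ^ (-1 - 2*s)) := by
          simp only [hwdef]
          rw [← mul_assoc, ← Real.rpow_add two_pos]
          norm_num
        rw [hp4, ← hp2]
        calc (2:ℝ) ^ (1 + 2*s) * ((2 * |r|) ^ (-1 - 2*s))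
            ≤ 2 ^ (1 + 2*s) * (1 + |r|) ^ (-1 - 2*s) :=
              mul_le_mul_of_nonneg_left hp1 (Real.rpow_nonneg (by norm_num) _)
        _ ≤ 8 * (1 + |r|) ^ (-1 - 2*s) :=
              mul_le_mul_of_nonneg_right hp3 (Real.rpow_nonneg (by positivity) _)
      calc J r ≤ D * (8 * (1 + |r|) ^ (-1 - 2*s)) * m r := by
            refine mul_le_mul_of_nonneg_right ?_ (hm_nonneg r)
            refine mul_le_mul (hminD r) hwn (hw_nonneg r) hD0.le
      _ = 8 * D * n r := by simp only [hndef]; ring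
    calc (∫ r in (Set.Ioo (-1:ℝ) 1)ᶜ, J r) ≤ ∫ r in (Set.Ioo (-1:ℝ) 1)ᶜ, 8 * D * n r :=
        setIntegral_mono_on hJint.integrableOn ((hnint.const_mul _)).integrableOn
          measurableSet_Ioo.compl hpt
    _ ≤ ∫ r : ℝ, 8 * D * n r := setIntegral_le_integral (hnint.const_mul _)
        (Filter.Eventually.of_forall fun r => mul_nonneg (by linarith) (hn_nonneg r))
    _ = 8 * D * ∫ r : ℝ, n r := MeasureTheory.integral_const_mul _ _
  -- the near part
  set A : ℝ := ∫ r in Set.Ioo (-1:ℝ) 1, J r with hAdef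
  set T1 : ℝ := (1 - s) * distBdry Ω x ^ (-s) *
      ({y | y ∈ Ωᶜ ∧ distBdry Ω y < 1} ∩
        closure (Function.support (nuStar Ω μ s))).indicator (fun _ => (1 : ℝ)) x with hT1def
  have hT1_nonneg : 0 ≤ T1 := by
    refine mul_nonneg (mul_nonneg h1s.le (Real.rpow_nonneg Metric.infDist_nonneg _)) ?_
    exact Set.indicator_nonneg (fun _ _ => zero_le_one) x
  have hclaim1 : (1 - s) * A ≤ 2 * Λ / s * T1 := by
    rcases le_or_gt A 0 with hA | hA
    · have : (1 - s) * A ≤ 0 := mul_nonpos_of_nonneg_of_nonpos h1s.le hA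
      have h2 : 0 ≤ 2 * Λ / s * T1 := mul_nonneg (by positivity) hT1_nonneg
      linarith
    · -- A > 0
      have hδ1 : δ < 1 := by
        by_contra hge
        push_neg at hge
        have hz : ∀ r ∈ Set.Ioo (-1:ℝ) 1, J r = 0 := by
          intro r hr
          have hm0 : m r = 0 := by
            by_contra hm0
            have h1 := (hm_supp r hm0).1
            have h2 : |r| < 1 := abs_lt.2 ⟨hr.1, hr.2⟩
            linarith
          simp only [hJdef, hm0, mul_zero]
        have : A = 0 := by
          rw [hAdef]
          rw [setIntegral_congr_fun measurableSet_Ioo hz]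
          simp
        linarith
      -- ν > 0
      have hK0 : (0:ℝ) < D * δ ^ (-1 - 2*s) * (1 + B) ^ (1 + 2*s) := by positivity
      have hJn : ∀ r : ℝ, J r ≤ (D * δ ^ (-1 - 2*s) * (1 + B) ^ (1 + 2*s)) * n r := by
        intro r
        by_cases hm0 : m r = 0
        · simp [hJdef, hndef, hm0]
        · obtain ⟨h1, h2⟩ := hm_supp r hm0
          have e1 : min |r| D ^ s * w r ≤ D * δ ^ (-1 - 2*s) :=
            mul_le_mul (hminD r) (Real.rpow_le_rpow_of_nonpos hδpos h1 (by linarith))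
              (hw_nonneg r) hD0.le
          have e2 : (1:ℝ) ≤ (1 + B) ^ (1 + 2*s) * (1 + |r|) ^ (-1 - 2*s) := by
            have hmono : ((1:ℝ) + B) ^ (-1 - 2*s) ≤ (1 + |r|) ^ (-1 - 2*s) :=
              Real.rpow_le_rpow_of_nonpos (by positivity) (by linarith) (by linarith)
            have hone : ((1:ℝ) + B) ^ (1 + 2*s) * (1 + B) ^ (-1 - 2*s) = 1 := by
              rw [← Real.rpow_add (by positivity)]
              norm_num
            calc (1:ℝ) = (1 + B) ^ (1 + 2*s) * (1 + B) ^ (-1 - 2*s) := hone.symm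
            _ ≤ (1 + B) ^ (1 + 2*s) * (1 + |r|) ^ (-1 - 2*s) :=
                mul_le_mul_of_nonneg_left hmono (Real.rpow_nonneg (by positivity) _)
          calc J r = (min |r| D ^ s * w r) * m r := rfl
          _ ≤ (D * δ ^ (-1 - 2*s)) * m r := mul_le_mul_of_nonneg_right e1 (hm_nonneg r)
          _ = (D * δ ^ (-1 - 2*s)) * (1 * m r) := by ring
          _ ≤ (D * δ ^ (-1 - 2*s)) *
                (((1 + B) ^ (1 + 2*s) * (1 + |r|) ^ (-1 - 2*s)) * m r) := by
              refine mul_le_mul_of_nonneg_left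
                (mul_le_mul_of_nonneg_right e2 (hm_nonneg r)) (by positivity)
          _ = (D * δ ^ (-1 - 2*s) * (1 + B) ^ (1 + 2*s)) * n r := by
              simp only [hndef]; ring
      have hν_pos : 0 < ∫ r : ℝ, n r := by
        by_contra h
        push_neg at h
        have hint0 : (∫ r : ℝ, n r) = 0 := le_antisymm h (integral_nonneg hn_nonneg)
        have hA0 : A ≤ 0 := by
          calc A ≤ ∫ r in Set.Ioo (-1:ℝ) 1,
              (D * δ ^ (-1 - 2*s) * (1 + B) ^ (1 + 2*s)) * n r :=
                setIntegral_mono_on hJint.integrableOn (hnint.const_mul _).integrableOn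
                  measurableSet_Ioo (fun r _ => hJn r)
          _ ≤ ∫ r : ℝ, (D * δ ^ (-1 - 2*s) * (1 + B) ^ (1 + 2*s)) * n r :=
              setIntegral_le_integral (hnint.const_mul _)
                (Filter.Eventually.of_forall fun r => mul_nonneg hK0.le (hn_nonneg r))
          _ = (D * δ ^ (-1 - 2*s) * (1 + B) ^ (1 + 2*s)) * ∫ r : ℝ, n r :=
              MeasureTheory.integral_const_mul _ _
          _ = 0 := by rw [hint0, mul_zero]
        linarith
      have hνx : 0 < nuStar Ω μ s x := by
        rw [hnu_eq]; exact mul_pos h1s hν_pos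
      have hx_mem : x ∈ ({y | y ∈ Ωᶜ ∧ distBdry Ω y < 1} ∩
          closure (Function.support (nuStar Ω μ s))) := by
        constructor
        · exact ⟨hxcl, hδ1⟩
        · exact subset_closure (Function.mem_support.2 hνx.ne')
      have hT1val : T1 = (1 - s) * δ ^ (-s) := by
        rw [hT1def, Set.indicator_of_mem hx_mem, mul_one]
      -- the integral bound
      set g : ℝ → ℝ := fun t => Set.indicator (Set.Icc δ 1) (fun u => u ^ (-1 - s)) t with hgdef
      have hg_nonneg : ∀ t, 0 ≤ g t := fun t =>
        Set.indicator_nonneg (fun u hu => Real.rpow_nonneg (le_trans hδpos.le hu.1) _) t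
      have hKpt : ∀ r ∈ Set.Ioo (-1:ℝ) 1, J r ≤ Λ * g |r| := by
        intro r hr
        by_cases hm0 : m r = 0
        · simp only [hJdef, hm0, mul_zero]
          exact mul_nonneg hΛ.le (hg_nonneg _)
        · obtain ⟨h1, h2⟩ := hm_supp r hm0
          have hrlt1 : |r| < 1 := abs_lt.2 ⟨hr.1, hr.2⟩
          have habs : |r| ∈ Set.Icc δ 1 := ⟨h1, hrlt1.le⟩
          have hr0 : 0 < |r| := lt_of_lt_of_le hδpos h1
          have hws : min |r| D ^ s * w r ≤ |r| ^ (-1 - s) := by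
            have hm1 : min |r| D ^ s ≤ |r| ^ s :=
              Real.rpow_le_rpow (hmin_nonneg r) (min_le_left _ _) hs0.le
            calc min |r| D ^ s * w r ≤ |r| ^ s * w r :=
                mul_le_mul_of_nonneg_right hm1 (hw_nonneg r)
            _ = |r| ^ (-1 - s) := by
                simp only [hwdef]
                rw [← Real.rpow_add hr0]
                ring_nf
          calc J r = (min |r| D ^ s * w r) * m r := rfl
          _ ≤ |r| ^ (-1 - s) * Λ :=
              mul_le_mul hws (hm_le r) (hm_nonneg r) (Real.rpow_nonneg (abs_nonneg r) _)
          _ = Λ * g |r| := by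
              simp only [hgdef, Set.indicator_of_mem habs]; ring
      have hgmeas : Measurable g := by
        refine Measurable.indicator ?_ measurableSet_Icc
        fun_prop
      have hKmeas : Measurable fun r : ℝ => Λ * g |r| :=
        (hgmeas.comp measurable_abs).const_mul Λ
      have hKbdd : ∀ r : ℝ, ‖Λ * g |r|‖ ≤ Set.indicator (Set.Icc (-1:ℝ) 1)
          (fun _ => Λ * δ ^ (-1 - s)) r := by
        intro r
        rw [Real.norm_eq_abs, abs_of_nonneg (mul_nonneg hΛ.le (hg_nonneg _))]
        by_cases hmem : |r| ∈ Set.Icc δ 1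
        · have hr1 : r ∈ Set.Icc (-1:ℝ) 1 := by
            rcases abs_le.1 hmem.2 with ⟨ha, hb⟩; exact ⟨ha, hb⟩
          rw [Set.indicator_of_mem hr1]
          simp only [hgdef]
          rw [Set.indicator_of_mem hmem]
          refine mul_le_mul_of_nonneg_left ?_ hΛ.le
          exact Real.rpow_le_rpow_of_nonpos hδpos hmem.1 (by linarith)
        · simp only [hgdef]
          rw [Set.indicator_of_notMem hmem, mul_zero]
          exact Set.indicator_nonneg
            (fun _ _ => mul_nonneg hΛ.le (Real.rpow_nonneg hδpos.le _)) r
      have hKint : Integrable fun r : ℝ => Λ * g |r| := by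
        refine Integrable.mono' ?_ hKmeas.aestronglyMeasurable
          (Filter.Eventually.of_forall hKbdd)
        exact (integrable_indicator_iff measurableSet_Icc).2
          (integrableOn_const measure_Icc_lt_top.ne enorm_ne_top)
      have hgval : (∫ t in Set.Ioi (0:ℝ), g t) = (δ ^ (-s) - 1) / s := by
        have h1 : (∫ t in Set.Ioi (0:ℝ), g t)
            = ∫ t in Set.Ioi (0:ℝ) ∩ Set.Icc δ 1, (fun u : ℝ => u ^ (-1 - s)) t := by
          simp only [hgdef]
          exact setIntegral_indicator measurableSet_Icc
        have h2 : Set.Ioi (0:ℝ) ∩ Set.Icc δ 1 = Set.Icc δ 1 :=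
          Set.inter_eq_self_of_subset_right (fun t ht => lt_of_lt_of_le hδpos ht.1)
        rw [h1, h2, integral_Icc_eq_integral_Ioc, ← intervalIntegral.integral_of_le hδ1.le]
        rw [integral_rpow (Or.inr ⟨by intro h; rw [sub_eq_neg_add] at h; nlinarith,
          by
            rw [Set.uIcc_of_le hδ1.le]
            intro h
            exact absurd h.1 (not_le.2 hδpos)⟩)]
        have hexp : -1 - s + 1 = -s := by ring
        rw [hexp, Real.one_rpow, div_neg, ← neg_div, neg_sub]
      have hAle : A ≤ 2 * Λ / s * δ ^ (-s) := by
        have step : A ≤ Λ * (2 * ((δ ^ (-s) - 1) / s)) := by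
          calc A ≤ ∫ r in Set.Ioo (-1:ℝ) 1, Λ * g |r| :=
              setIntegral_mono_on hJint.integrableOn hKint.integrableOn
                measurableSet_Ioo hKpt
          _ ≤ ∫ r : ℝ, Λ * g |r| := setIntegral_le_integral hKint
              (Filter.Eventually.of_forall fun r => mul_nonneg hΛ.le (hg_nonneg _))
          _ = Λ * ∫ r : ℝ, g |r| := MeasureTheory.integral_const_mul _ _
          _ = Λ * (2 * ∫ t in Set.Ioi (0:ℝ), g t) := by rw [integral_comp_abs]
          _ = Λ * (2 * ((δ ^ (-s) - 1) / s)) := by rw [hgval]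
        have hδs_nonneg : 0 ≤ δ ^ (-s) := Real.rpow_nonneg hδpos.le _
        have h2 : Λ * (2 * ((δ ^ (-s) - 1) / s)) ≤ 2 * Λ / s * δ ^ (-s) := by
          have e : Λ * (2 * ((δ ^ (-s) - 1) / s)) = 2 * Λ * (δ ^ (-s) - 1) / s := by ring
          have e2 : 2 * Λ / s * δ ^ (-s) = 2 * Λ * δ ^ (-s) / s := by ring
          rw [e, e2, div_le_div_iff₀ hs0 hs0]
          nlinarith [mul_pos hΛ hs0]
        linarith
      rw [hT1val]
      calc (1 - s) * A ≤ (1 - s) * (2 * Λ / s * δ ^ (-s)) :=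
          mul_le_mul_of_nonneg_left hAle h1s.le
      _ = 2 * Λ / s * ((1 - s) * δ ^ (-s)) := by ring
  -- final assembly
  have hclaim2 : (1 - s) * (∫ r in (Set.Ioo (-1:ℝ) 1)ᶜ, J r) ≤ 8 * D * nuStar Ω μ s x := by
    calc (1 - s) * (∫ r in (Set.Ioo (-1:ℝ) 1)ᶜ, J r)
        ≤ (1 - s) * (8 * D * ∫ r : ℝ, n r) := mul_le_mul_of_nonneg_left hcompl h1s.le
    _ = 8 * D * ((1 - s) * ∫ r : ℝ, n r) := by ring
    _ = 8 * D * nuStar Ω μ s x := by rw [← hnu_eq]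
  have hfin1 : 2 * Λ / s ≤ C / s := by
    exact div_le_div_of_nonneg_right hC2Λ hs0.le
  have hfin2 : (8:ℝ) * D ≤ C / s := by
    have h1 : C ≤ C / s := by
      rw [le_div_iff₀ hs0]
      nlinarith
    linarith
  rw [tauWt, ← hT1def]
  calc -Ns Ω μ s (fun y => distBdry Ω y ^ s) x
      = (1 - s) * ∫ r : ℝ, ∫ θ : Sph d,
          Ω.indicator (fun _ => (1:ℝ)) (x + r • (θ : Euc d)) *
            (distBdry Ω (x + r • (θ : Euc d)) ^ s - distBdry Ω x ^ s) * w r ∂μ := hNs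
  _ ≤ (1 - s) * ∫ r : ℝ, J r := mul_le_mul_of_nonneg_left hOuter h1s.le
  _ = (1 - s) * A + (1 - s) * ∫ r in (Set.Ioo (-1:ℝ) 1)ᶜ, J r := by
      rw [hsplit, hAdef]; ring
  _ ≤ 2 * Λ / s * T1 + 8 * D * nuStar Ω μ s x := add_le_add hclaim1 hclaim2
  _ ≤ C / s * T1 + C / s * nuStar Ω μ s x := by
      refine add_le_add (mul_le_mul_of_nonneg_right hfin1 hT1_nonneg)
        (mul_le_mul_of_nonneg_right hfin2 hν_nonneg)
  _ = C / s * (T1 + nuStar Ω μ s x) := by ring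
end
end

section
/- Let d ≥ 1 and s_⋆ ∈ (0,1). There exists a constant c > 0 depending only on d and s_⋆ such that for every bounded open set Ω ⊂ ℝ^d, every β > 0, every s ∈ (s_⋆,1), and every measurable u : Ω → ℝ, ∫_Ω ∫_{Ω ∖ B(x, d_x/8)} (d_x ∧ d_y)^β |u(x)-u(y)|² |x-y|^{-(d+2s)} dy dx ≤ c ∫_Ω |u(x)|² d_x^{β-2s} dx. -/
open MeasureTheory Metric Set Filter
open scoped ENNReal NNReal Topology

noncomputable section

section Statement4Aux

open ENNReal

private lemma exists_dyadic' {ρ t : ℝ} (hρ : 0 < ρ) (ht : ρ ≤ t) :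
    ∃ n : ℕ, (2:ℝ) ^ n * ρ ≤ t ∧ t < (2:ℝ) ^ (n + 1) * ρ := by
  classical
  have hex : ∃ m : ℕ, t < (2:ℝ) ^ m * ρ := by
    obtain ⟨m, hm⟩ := pow_unbounded_of_one_lt (t / ρ) (one_lt_two (α := ℝ))
    exact ⟨m, by rwa [div_lt_iff₀ hρ] at hm⟩
  have hm0 : Nat.find hex ≠ 0 := by
    intro h
    have h2 := Nat.find_spec hex
    rw [h] at h2
    simp only [pow_zero, one_mul] at h2
    linarith
  obtain ⟨n, hn⟩ : ∃ n, Nat.find hex = n + 1 :=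
    ⟨Nat.find hex - 1, (Nat.succ_pred_eq_of_pos (Nat.pos_of_ne_zero hm0)).symm⟩
  refine ⟨n, ?_, ?_⟩
  · have h3 := Nat.find_min hex (m := n) (by omega)
    push_neg at h3
    exact h3
  · have h4 := Nat.find_spec hex
    rwa [hn] at h4

private lemma dyadic_term' {ρ : ℝ} (hρ : 0 < ρ) (σ : ℝ) (d n : ℕ) :
    ((2:ℝ) ^ n * ρ) ^ (-σ) * ((2:ℝ) ^ (n + 1) * ρ) ^ d =
      ((2:ℝ) ^ (d : ℝ) * ρ ^ ((d : ℝ) - σ)) * ((2:ℝ) ^ ((d : ℝ) - σ)) ^ n := by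
  have h2 : (0:ℝ) < 2 := two_pos
  have e1 : ((2:ℝ) ^ n * ρ) ^ (-σ) = (2:ℝ) ^ ((n : ℝ) * (-σ)) * ρ ^ (-σ) := by
    rw [Real.mul_rpow (by positivity) hρ.le, ← Real.rpow_natCast (2:ℝ) n,
      ← Real.rpow_mul h2.le]
  have e2 : ((2:ℝ) ^ (n + 1) * ρ) ^ d = (2:ℝ) ^ (((n : ℝ) + 1) * (d : ℝ)) * ρ ^ (d : ℝ) := by
    rw [← Real.rpow_natCast ((2:ℝ) ^ (n + 1) * ρ) d, Real.mul_rpow (by positivity) hρ.le,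
      ← Real.rpow_natCast (2:ℝ) (n + 1), ← Real.rpow_mul h2.le]
    push_cast
    ring_nf
  have e3 : ((2:ℝ) ^ ((d : ℝ) - σ)) ^ n = (2:ℝ) ^ (((d : ℝ) - σ) * (n : ℝ)) := by
    rw [← Real.rpow_natCast ((2:ℝ) ^ ((d : ℝ) - σ)) n, ← Real.rpow_mul h2.le]
  rw [e1, e2, e3, mul_mul_mul_comm, ← Real.rpow_add h2, ← Real.rpow_add hρ, mul_right_comm,
    ← Real.rpow_add h2,
    show (n : ℝ) * (-σ) + ((n : ℝ) + 1) * (d : ℝ) = (d : ℝ) + ((d : ℝ) - σ) * (n : ℝ) by ring,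
    show -σ + (d : ℝ) = (d : ℝ) - σ by ring]

private lemma radial_bound' {d : ℕ} (hd : 1 ≤ d) {sStar s : ℝ} (hs0 : 0 < sStar)
    (hss : sStar < s) (hs1 : s < 1) {ρ : ℝ} (hρ : 0 < ρ) (c : Euc d) :
    ∫⁻ y in (Metric.ball c ρ)ᶜ, ENNReal.ofReal (dist y c ^ (-((d : ℝ) + 2 * s))) ≤
      ENNReal.ofReal ((2:ℝ) ^ (d : ℝ) * (volume (Metric.ball (0 : Euc d) 1)).toReal
        * (1 - (2:ℝ) ^ (-(2 * sStar)))⁻¹ * ρ ^ (-(2 * s))) := by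
  have hdr : (0:ℝ) < d := by exact_mod_cast hd
  have hspos : 0 < s := hs0.trans hss
  have hnt : Nontrivial (Euc d) := Module.nontrivial_of_finrank_pos (R := ℝ)
    (by rw [finrank_euclideanSpace_fin]; exact hd)
  set σ : ℝ := (d : ℝ) + 2 * s with hσdef
  have hσpos : 0 < σ := by positivity
  set V : ℝ≥0∞ := volume (Metric.ball (0 : Euc d) 1) with hVdef
  have hVfin : V ≠ ⊤ := measure_ball_lt_top.ne
  set A : ℕ → Set (Euc d) :=
    fun n => Metric.ball c ((2:ℝ) ^ (n + 1) * ρ) \ Metric.ball c ((2:ℝ) ^ n * ρ) with hA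
  have hsub : (Metric.ball c ρ)ᶜ ⊆ ⋃ n, A n := by
    intro y hy
    have hy' : ρ ≤ dist y c := by simpa [Metric.mem_ball, not_lt] using hy
    obtain ⟨n, h1, h2⟩ := exists_dyadic' hρ hy'
    exact Set.mem_iUnion.2 ⟨n, ⟨Metric.mem_ball.2 h2, by simp [Metric.mem_ball, not_lt, h1]⟩⟩
  have h2negs : (2:ℝ) ^ (-(2 * sStar)) < 1 :=
    Real.rpow_lt_one_of_one_lt_of_neg one_lt_two (by linarith)
  calc ∫⁻ y in (Metric.ball c ρ)ᶜ, ENNReal.ofReal (dist y c ^ (-σ))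
      ≤ ∫⁻ y in ⋃ n, A n, ENNReal.ofReal (dist y c ^ (-σ)) := lintegral_mono_set hsub
    _ ≤ ∑' n, ∫⁻ y in A n, ENNReal.ofReal (dist y c ^ (-σ)) := lintegral_iUnion_le _ _
    _ ≤ ∑' n, ENNReal.ofReal (((2:ℝ) ^ n * ρ) ^ (-σ))
          * (ENNReal.ofReal (((2:ℝ) ^ (n + 1) * ρ) ^ d) * V) := by
        refine ENNReal.tsum_le_tsum fun n => ?_
        calc ∫⁻ y in A n, ENNReal.ofReal (dist y c ^ (-σ))
            ≤ ∫⁻ _ in A n, ENNReal.ofReal (((2:ℝ) ^ n * ρ) ^ (-σ)) := by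
              refine setLIntegral_mono measurable_const fun y hy => ?_
              refine ENNReal.ofReal_le_ofReal
                (Real.rpow_le_rpow_of_nonpos (by positivity) ?_ (by linarith))
              simpa [Metric.mem_ball, not_lt] using hy.2
          _ = ENNReal.ofReal (((2:ℝ) ^ n * ρ) ^ (-σ)) * volume (A n) := setLIntegral_const _ _
          _ ≤ ENNReal.ofReal (((2:ℝ) ^ n * ρ) ^ (-σ))
                * (ENNReal.ofReal (((2:ℝ) ^ (n + 1) * ρ) ^ d) * V) := by
              refine mul_le_mul_right ?_ _
              calc volume (A n) ≤ volume (Metric.ball c ((2:ℝ) ^ (n + 1) * ρ)) :=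
                    measure_mono Set.diff_subset
                _ = ENNReal.ofReal (((2:ℝ) ^ (n + 1) * ρ) ^ Module.finrank ℝ (Euc d)) * V :=
                    MeasureTheory.Measure.addHaar_ball volume c (by positivity)
                _ = ENNReal.ofReal (((2:ℝ) ^ (n + 1) * ρ) ^ d) * V := by
                    rw [finrank_euclideanSpace_fin]
    _ = ∑' n, (ENNReal.ofReal ((2:ℝ) ^ (d : ℝ) * ρ ^ (-(2 * s)))
          * ENNReal.ofReal ((2:ℝ) ^ (-(2 * s))) ^ n) * V := by
        refine tsum_congr fun n => ?_
        have hp1 : (0:ℝ) ≤ ((2:ℝ) ^ n * ρ) ^ (-σ) := Real.rpow_nonneg (by positivity) _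
        have ha : (0:ℝ) ≤ (2:ℝ) ^ (d : ℝ) * ρ ^ (-(2 * s)) := by positivity
        have hb : (0:ℝ) ≤ (2:ℝ) ^ (-(2 * s)) := Real.rpow_nonneg (by norm_num) _
        rw [← mul_assoc, ← ENNReal.ofReal_mul hp1, dyadic_term' hρ σ d n,
          show (d : ℝ) - σ = -(2 * s) by rw [hσdef]; ring,
          ENNReal.ofReal_mul ha, ENNReal.ofReal_pow hb]
    _ = ENNReal.ofReal ((2:ℝ) ^ (d : ℝ) * ρ ^ (-(2 * s)))
          * (1 - ENNReal.ofReal ((2:ℝ) ^ (-(2 * s))))⁻¹ * V := by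
        rw [ENNReal.tsum_mul_right, ENNReal.tsum_mul_left, ENNReal.tsum_geometric]
    _ ≤ ENNReal.ofReal ((2:ℝ) ^ (d : ℝ) * ρ ^ (-(2 * s)))
          * ENNReal.ofReal ((1 - (2:ℝ) ^ (-(2 * sStar)))⁻¹) * V := by
        refine mul_le_mul_left (mul_le_mul_right ?_ _) V
        have h1 : (2:ℝ) ^ (-(2 * s)) ≤ (2:ℝ) ^ (-(2 * sStar)) :=
          Real.rpow_le_rpow_of_exponent_le one_le_two (by linarith)
        have h1' : ENNReal.ofReal ((2:ℝ) ^ (-(2 * s)))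
            ≤ ENNReal.ofReal ((2:ℝ) ^ (-(2 * sStar))) := ENNReal.ofReal_le_ofReal h1
        have hb0 : (0:ℝ) ≤ (2:ℝ) ^ (-(2 * sStar)) := Real.rpow_nonneg (by norm_num) _
        calc (1 - ENNReal.ofReal ((2:ℝ) ^ (-(2 * s))))⁻¹
            ≤ (1 - ENNReal.ofReal ((2:ℝ) ^ (-(2 * sStar))))⁻¹ := by
              gcongr
          _ = ENNReal.ofReal ((1 - (2:ℝ) ^ (-(2 * sStar)))⁻¹) := by
              rw [ENNReal.ofReal_inv_of_pos (by linarith : (0:ℝ) < 1 - (2:ℝ) ^ (-(2 * sStar))),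
                ENNReal.ofReal_sub 1 hb0, ENNReal.ofReal_one]
    _ = ENNReal.ofReal ((2:ℝ) ^ (d : ℝ) * (volume (Metric.ball (0 : Euc d) 1)).toReal
          * (1 - (2:ℝ) ^ (-(2 * sStar)))⁻¹ * ρ ^ (-(2 * s))) := by
        have ha : (0:ℝ) ≤ (2:ℝ) ^ (d : ℝ) * ρ ^ (-(2 * s)) := by positivity
        have hb : (0:ℝ) ≤ (1 - (2:ℝ) ^ (-(2 * sStar)))⁻¹ := inv_nonneg.2 (by linarith)
        rw [show V = ENNReal.ofReal V.toReal from (ENNReal.ofReal_toReal hVfin).symm,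
          ← ENNReal.ofReal_mul ha, ← ENNReal.ofReal_mul (mul_nonneg ha hb)]
        congr 1
        rw [hVdef]
        ring

private lemma minsplit' {A B a b β : ℝ} (hA : 0 ≤ A) (hB : 0 ≤ B) (hβ : 0 ≤ β) :
    min A B ^ β * (a - b) ^ 2 ≤ 2 * a ^ 2 * A ^ β + 2 * b ^ 2 * B ^ β := by
  have hmin : 0 ≤ min A B := le_min hA hB
  have hm : 0 ≤ min A B ^ β := Real.rpow_nonneg hmin β
  have h1 : min A B ^ β ≤ A ^ β := Real.rpow_le_rpow hmin (min_le_left _ _) hβ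
  have h2 : min A B ^ β ≤ B ^ β := Real.rpow_le_rpow hmin (min_le_right _ _) hβ
  have h3 : 2 * a ^ 2 * min A B ^ β ≤ 2 * a ^ 2 * A ^ β :=
    mul_le_mul_of_nonneg_left h1 (by positivity)
  have h4 : 2 * b ^ 2 * min A B ^ β ≤ 2 * b ^ 2 * B ^ β :=
    mul_le_mul_of_nonneg_left h2 (by positivity)
  have h5 : (a - b) ^ 2 * min A B ^ β ≤ (2 * a ^ 2 + 2 * b ^ 2) * min A B ^ β := by
    apply mul_le_mul_of_nonneg_right _ hm
    nlinarith [sq_nonneg (a + b)]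
  nlinarith [h3, h4, h5]

private lemma arith' {Mc U D s β r : ℝ} (hMc : 0 ≤ Mc) (hD : 0 < D) (hU : 0 ≤ U)
    (hs0 : 0 < s) (hs1 : s < 1) (hr1 : 1 ≤ r) (hr9 : r ≤ 9) :
    2 * U * D ^ β * (Mc * (D / r) ^ (-(2 * s))) ≤ 162 * Mc * (U * D ^ (β - 2 * s)) := by
  have hrpos : (0:ℝ) < r := lt_of_lt_of_le one_pos hr1
  have e1 : (D / r) ^ (-(2 * s)) = D ^ (-(2 * s)) * r ^ (2 * s) := by
    rw [Real.div_rpow hD.le hrpos.le, div_eq_mul_inv, ← Real.rpow_neg hrpos.le, neg_neg]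
  have e2 : D ^ β * D ^ (-(2 * s)) = D ^ (β - 2 * s) := by
    rw [← Real.rpow_add hD]; ring_nf
  have h81 : r ^ (2 * s) ≤ 81 := by
    calc r ^ (2 * s) ≤ r ^ (2:ℝ) := Real.rpow_le_rpow_of_exponent_le hr1 (by linarith)
      _ = r ^ (2:ℕ) := by rw [← Real.rpow_natCast r 2]; norm_num
      _ ≤ 81 := by nlinarith
  have hrp : 0 ≤ r ^ (2 * s) := Real.rpow_nonneg hrpos.le _
  have hDb : 0 ≤ D ^ (β - 2 * s) := Real.rpow_nonneg hD.le _
  calc 2 * U * D ^ β * (Mc * (D / r) ^ (-(2 * s)))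
      = (2 * r ^ (2 * s)) * Mc * (U * (D ^ β * D ^ (-(2 * s)))) := by rw [e1]; ring
    _ = (2 * r ^ (2 * s)) * Mc * (U * D ^ (β - 2 * s)) := by rw [e2]
    _ ≤ 162 * Mc * (U * D ^ (β - 2 * s)) := by
        apply mul_le_mul_of_nonneg_right _ (mul_nonneg hU hDb)
        apply mul_le_mul_of_nonneg_right _ hMc
        linarith

private lemma geom9' {d : ℕ} (Ω : Set (Euc d)) (x y : Euc d)
    (h : distBdry Ω x / 8 ≤ dist x y) : distBdry Ω y / 9 ≤ dist x y := by
  by_contra hc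
  push_neg at hc
  have h1 : distBdry Ω y ≤ distBdry Ω x + dist y x := Metric.infDist_le_infDist_add_dist
  rw [dist_comm] at h1
  have h0 : 0 ≤ distBdry Ω y := Metric.infDist_nonneg
  linarith

end Statement4Aux
section Statement4Aux2

open ENNReal

/-- The off-diagonal set used in the proof of `statement4`. -/
private def Eset {d : ℕ} (Ω : Set (Euc d)) : Set (Euc d × Euc d) :=
  (Ω ×ˢ Ω) ∩ {p : Euc d × Euc d | distBdry Ω p.1 / 8 ≤ dist p.1 p.2}

private lemma mem_Eset {d : ℕ} {Ω : Set (Euc d)} {x y : Euc d} :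
    (x, y) ∈ Eset Ω ↔ x ∈ Ω ∧ y ∈ Ω ∧ distBdry Ω x / 8 ≤ dist x y := by
  simp [Eset, Set.mem_prod, and_assoc]

private lemma measurable_distBdry {d : ℕ} (Ω : Set (Euc d)) : Measurable (distBdry Ω) :=
  (Metric.continuous_infDist_pt (frontier Ω)).measurable

private lemma measurableSet_Eset {d : ℕ} {Ω : Set (Euc d)} (hΩ : IsOpen Ω) :
    MeasurableSet (Eset Ω) :=
  (hΩ.measurableSet.prod hΩ.measurableSet).inter
    (measurableSet_le (((measurable_distBdry Ω).comp measurable_fst).div_const 8)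
      measurable_dist)

end Statement4Aux2
/-- Step 1 in the proof of Lemma 3.1: the far-off-diagonal part of the
weighted energy is controlled by a weighted `L²`-norm. -/
theorem statement4 {d : ℕ} (hd : 1 ≤ d) (sStar : ℝ) (hsStar : sStar ∈ Set.Ioo (0 : ℝ) 1) :
    ∃ c : ℝ, 0 < c ∧ ∀ Ω : Set (Euc d), IsOpen Ω → Bornology.IsBounded Ω →
      ∀ β : ℝ, 0 < β → ∀ s ∈ Set.Ioo sStar 1, ∀ u : Euc d → ℝ, Measurable u →
      (∫⁻ x in Ω, ∫⁻ y in Ω \ Metric.ball x (distBdry Ω x / 8), ENNReal.ofReal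
          (min (distBdry Ω x) (distBdry Ω y) ^ β * (u x - u y) ^ 2
            * ‖x - y‖ ^ (-((d : ℝ) + 2 * s))))
        ≤ ENNReal.ofReal c *
            ∫⁻ x in Ω, ENNReal.ofReal (u x ^ 2 * distBdry Ω x ^ (β - 2 * s)) := by
  obtain ⟨hsS0, hsS1⟩ := hsStar
  have h2negs : (2:ℝ) ^ (-(2 * sStar)) < 1 :=
    Real.rpow_lt_one_of_one_lt_of_neg one_lt_two (by linarith)
  set Mc : ℝ := (2:ℝ) ^ (d : ℝ) * (volume (Metric.ball (0 : Euc d) 1)).toReal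
    * (1 - (2:ℝ) ^ (-(2 * sStar)))⁻¹ with hMcdef
  have hMc : 0 ≤ Mc := by
    have h1 : (0:ℝ) ≤ (1 - (2:ℝ) ^ (-(2 * sStar)))⁻¹ := by
      apply inv_nonneg.2; linarith
    have h2 : (0:ℝ) ≤ (volume (Metric.ball (0 : Euc d) 1)).toReal := ENNReal.toReal_nonneg
    rw [hMcdef]
    positivity
  refine ⟨324 * Mc + 1, by linarith, ?_⟩
  intro Ω hΩo hΩb β hβ s hs u hu
  obtain ⟨hss, hs1⟩ := hs
  have hs0 : 0 < s := hsS0.trans hss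
  have mD : Measurable (distBdry Ω) := measurable_distBdry Ω
  have hDnn : ∀ x, 0 ≤ distBdry Ω x := fun x => Metric.infDist_nonneg
  have mE : MeasurableSet (Eset Ω) := measurableSet_Eset hΩo
  -- measurability facts
  have mk : Measurable fun p : Euc d × Euc d =>
      ENNReal.ofReal (‖p.1 - p.2‖ ^ (-((d : ℝ) + 2 * s))) :=
    ((measurable_fst.sub measurable_snd).norm.pow measurable_const).ennreal_ofReal
  have mf1 : Measurable fun x : Euc d => ENNReal.ofReal (2 * u x ^ 2 * distBdry Ω x ^ β) :=
    ((measurable_const.mul (hu.pow measurable_const)).mul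
      (mD.pow measurable_const)).ennreal_ofReal
  have mg : Measurable fun x : Euc d =>
      ENNReal.ofReal (u x ^ 2 * distBdry Ω x ^ (β - 2 * s)) :=
    ((hu.pow measurable_const).mul (mD.pow measurable_const)).ennreal_ofReal
  have mP : Measurable fun p : Euc d × Euc d =>
      (Eset Ω).indicator (fun _ => (1:ℝ≥0∞)) p := measurable_const.indicator mE
  have mFA : Measurable fun p : Euc d × Euc d =>
      (Eset Ω).indicator (fun _ => (1:ℝ≥0∞)) p
        * (ENNReal.ofReal (2 * u p.1 ^ 2 * distBdry Ω p.1 ^ β)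
            * ENNReal.ofReal (‖p.1 - p.2‖ ^ (-((d : ℝ) + 2 * s)))) :=
    mP.mul ((mf1.comp measurable_fst).mul mk)
  have mFB : Measurable fun p : Euc d × Euc d =>
      (Eset Ω).indicator (fun _ => (1:ℝ≥0∞)) p
        * (ENNReal.ofReal (2 * u p.2 ^ 2 * distBdry Ω p.2 ^ β)
            * ENNReal.ofReal (‖p.1 - p.2‖ ^ (-((d : ℝ) + 2 * s)))) :=
    mP.mul ((mf1.comp measurable_snd).mul mk)
  -- Step 0: rewrite the inner set-integral through the indicator of `Eset Ω`.
  have hL : (∫⁻ x in Ω, ∫⁻ y in Ω \ Metric.ball x (distBdry Ω x / 8), ENNReal.ofReal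
        (min (distBdry Ω x) (distBdry Ω y) ^ β * (u x - u y) ^ 2
          * ‖x - y‖ ^ (-((d : ℝ) + 2 * s))))
      = ∫⁻ x in Ω, ∫⁻ y, (Eset Ω).indicator (fun _ => (1:ℝ≥0∞)) (x, y) * ENNReal.ofReal
          (min (distBdry Ω x) (distBdry Ω y) ^ β * (u x - u y) ^ 2
            * ‖x - y‖ ^ (-((d : ℝ) + 2 * s))) := by
    refine setLIntegral_congr_fun hΩo.measurableSet (fun x hx => ?_)
    rw [← lintegral_indicator (hΩo.measurableSet.diff measurableSet_ball)]
    refine lintegral_congr fun y => ?_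
    by_cases hy : y ∈ Ω \ Metric.ball x (distBdry Ω x / 8)
    · have hxy : (x, y) ∈ Eset Ω := by
        refine mem_Eset.2 ⟨hx, hy.1, ?_⟩
        have h' : ¬ dist y x < distBdry Ω x / 8 := fun h => hy.2 (Metric.mem_ball.2 h)
        rw [dist_comm]
        exact not_lt.1 h'
      rw [Set.indicator_of_mem hy, Set.indicator_of_mem hxy, one_mul]
    · have hxy : (x, y) ∉ Eset Ω := by
        intro hmem
        obtain ⟨h1, h2, h3⟩ := mem_Eset.1 hmem
        refine hy ⟨h2, ?_⟩
        intro hball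
        have hlt : dist y x < distBdry Ω x / 8 := Metric.mem_ball.1 hball
        rw [dist_comm] at hlt
        exact absurd h3 (not_le.2 hlt)
      rw [Set.indicator_of_notMem hy, Set.indicator_of_notMem hxy, zero_mul]
  -- Step A : the `u x` part
  have hxA : ∀ x : Euc d, (∫⁻ y, (Eset Ω).indicator (fun _ => (1:ℝ≥0∞)) (x, y)
        * (ENNReal.ofReal (2 * u x ^ 2 * distBdry Ω x ^ β)
            * ENNReal.ofReal (‖x - y‖ ^ (-((d : ℝ) + 2 * s)))))
      ≤ ENNReal.ofReal (162 * Mc)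
          * ENNReal.ofReal (u x ^ 2 * distBdry Ω x ^ (β - 2 * s)) := by
    intro x
    rcases (hDnn x).eq_or_lt with hDx | hDx
    · have hf0 : ENNReal.ofReal (2 * u x ^ 2 * distBdry Ω x ^ β) = 0 := by
        rw [← hDx, Real.zero_rpow (ne_of_gt hβ), mul_zero, ENNReal.ofReal_zero]
      simp [hf0]
    · have hρ : 0 < distBdry Ω x / 8 := by linarith
      have hptw : ∀ y, (Eset Ω).indicator (fun _ => (1:ℝ≥0∞)) (x, y)
          * (ENNReal.ofReal (2 * u x ^ 2 * distBdry Ω x ^ β)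
              * ENNReal.ofReal (‖x - y‖ ^ (-((d : ℝ) + 2 * s))))
          ≤ ENNReal.ofReal (2 * u x ^ 2 * distBdry Ω x ^ β)
            * ((Metric.ball x (distBdry Ω x / 8))ᶜ).indicator
                (fun y => ENNReal.ofReal (dist y x ^ (-((d : ℝ) + 2 * s)))) y := by
        intro y
        by_cases hxy : (x, y) ∈ Eset Ω
        · have hd8 : distBdry Ω x / 8 ≤ dist y x := by
            rw [dist_comm]; exact (mem_Eset.1 hxy).2.2
          have hyb : y ∈ (Metric.ball x (distBdry Ω x / 8))ᶜ := by
            simp only [Set.mem_compl_iff, Metric.mem_ball, not_lt]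
            exact hd8
          rw [Set.indicator_of_mem hxy, Set.indicator_of_mem hyb, one_mul,
            show ‖x - y‖ = dist y x by rw [dist_comm, dist_eq_norm]]
        · rw [Set.indicator_of_notMem hxy, zero_mul]; exact zero_le
      calc (∫⁻ y, (Eset Ω).indicator (fun _ => (1:ℝ≥0∞)) (x, y)
            * (ENNReal.ofReal (2 * u x ^ 2 * distBdry Ω x ^ β)
                * ENNReal.ofReal (‖x - y‖ ^ (-((d : ℝ) + 2 * s)))))
          ≤ ∫⁻ y, ENNReal.ofReal (2 * u x ^ 2 * distBdry Ω x ^ β)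
              * ((Metric.ball x (distBdry Ω x / 8))ᶜ).indicator
                  (fun y => ENNReal.ofReal (dist y x ^ (-((d : ℝ) + 2 * s)))) y :=
            lintegral_mono hptw
        _ = ENNReal.ofReal (2 * u x ^ 2 * distBdry Ω x ^ β)
              * ∫⁻ y in (Metric.ball x (distBdry Ω x / 8))ᶜ,
                  ENNReal.ofReal (dist y x ^ (-((d : ℝ) + 2 * s))) := by
            rw [lintegral_const_mul _ ((((measurable_id'.dist
              measurable_const).pow measurable_const).ennreal_ofReal).indicator
              measurableSet_ball.compl), lintegral_indicator measurableSet_ball.compl]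
        _ ≤ ENNReal.ofReal (2 * u x ^ 2 * distBdry Ω x ^ β)
              * ENNReal.ofReal (Mc * (distBdry Ω x / 8) ^ (-(2 * s))) := by
            refine mul_le_mul_right ?_ _
            have hr := radial_bound' hd hsS0 hss hs1 hρ x
            rw [hMcdef]
            exact hr
        _ ≤ ENNReal.ofReal (162 * Mc)
              * ENNReal.ofReal (u x ^ 2 * distBdry Ω x ^ (β - 2 * s)) := by
            have hfx : (0:ℝ) ≤ 2 * u x ^ 2 * distBdry Ω x ^ β :=
              mul_nonneg (by positivity) (Real.rpow_nonneg (hDnn x) β)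
            rw [← ENNReal.ofReal_mul hfx, ← ENNReal.ofReal_mul (by linarith : (0:ℝ) ≤ 162 * Mc)]
            exact ENNReal.ofReal_le_ofReal
              (arith' hMc hDx (sq_nonneg _) hs0 hs1 (by norm_num) (by norm_num))
  have hA : (∫⁻ x in Ω, ∫⁻ y, (Eset Ω).indicator (fun _ => (1:ℝ≥0∞)) (x, y)
        * (ENNReal.ofReal (2 * u x ^ 2 * distBdry Ω x ^ β)
            * ENNReal.ofReal (‖x - y‖ ^ (-((d : ℝ) + 2 * s)))))
      ≤ ENNReal.ofReal (162 * Mc)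
          * ∫⁻ x in Ω, ENNReal.ofReal (u x ^ 2 * distBdry Ω x ^ (β - 2 * s)) := by
    calc (∫⁻ x in Ω, ∫⁻ y, (Eset Ω).indicator (fun _ => (1:ℝ≥0∞)) (x, y)
          * (ENNReal.ofReal (2 * u x ^ 2 * distBdry Ω x ^ β)
              * ENNReal.ofReal (‖x - y‖ ^ (-((d : ℝ) + 2 * s)))))
        ≤ ∫⁻ x in Ω, ENNReal.ofReal (162 * Mc)
            * ENNReal.ofReal (u x ^ 2 * distBdry Ω x ^ (β - 2 * s)) :=
          setLIntegral_mono (measurable_const.mul mg) fun x _ => hxA x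
      _ = ENNReal.ofReal (162 * Mc)
            * ∫⁻ x in Ω, ENNReal.ofReal (u x ^ 2 * distBdry Ω x ^ (β - 2 * s)) :=
          lintegral_const_mul _ mg
  -- Step B : the `u y` part, via Tonelli
  have hyB : ∀ y : Euc d, (∫⁻ x, (Eset Ω).indicator (fun _ => (1:ℝ≥0∞)) (x, y)
        * (ENNReal.ofReal (2 * u y ^ 2 * distBdry Ω y ^ β)
            * ENNReal.ofReal (‖x - y‖ ^ (-((d : ℝ) + 2 * s)))))
      ≤ ENNReal.ofReal (162 * Mc)
          * Ω.indicator (fun y => ENNReal.ofReal (u y ^ 2 * distBdry Ω y ^ (β - 2 * s))) y := by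
    intro y
    by_cases hyΩ : y ∈ Ω
    · rcases (hDnn y).eq_or_lt with hDy | hDy
      · have hf0 : ENNReal.ofReal (2 * u y ^ 2 * distBdry Ω y ^ β) = 0 := by
          rw [← hDy, Real.zero_rpow (ne_of_gt hβ), mul_zero, ENNReal.ofReal_zero]
        simp [hf0]
      · have hρ : 0 < distBdry Ω y / 9 := by linarith
        have hptw : ∀ x, (Eset Ω).indicator (fun _ => (1:ℝ≥0∞)) (x, y)
            * (ENNReal.ofReal (2 * u y ^ 2 * distBdry Ω y ^ β)
                * ENNReal.ofReal (‖x - y‖ ^ (-((d : ℝ) + 2 * s))))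
            ≤ ENNReal.ofReal (2 * u y ^ 2 * distBdry Ω y ^ β)
              * ((Metric.ball y (distBdry Ω y / 9))ᶜ).indicator
                  (fun x => ENNReal.ofReal (dist x y ^ (-((d : ℝ) + 2 * s)))) x := by
          intro x
          by_cases hxy : (x, y) ∈ Eset Ω
          · have h8 : distBdry Ω x / 8 ≤ dist x y := (mem_Eset.1 hxy).2.2
            have h9 := geom9' Ω x y h8
            have hxb : x ∈ (Metric.ball y (distBdry Ω y / 9))ᶜ := by
              simp only [Set.mem_compl_iff, Metric.mem_ball, not_lt]
              exact h9
            rw [Set.indicator_of_mem hxy, Set.indicator_of_mem hxb, one_mul,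
              show ‖x - y‖ = dist x y from (dist_eq_norm x y).symm]
          · rw [Set.indicator_of_notMem hxy, zero_mul]; exact zero_le
        calc (∫⁻ x, (Eset Ω).indicator (fun _ => (1:ℝ≥0∞)) (x, y)
              * (ENNReal.ofReal (2 * u y ^ 2 * distBdry Ω y ^ β)
                  * ENNReal.ofReal (‖x - y‖ ^ (-((d : ℝ) + 2 * s)))))
            ≤ ∫⁻ x, ENNReal.ofReal (2 * u y ^ 2 * distBdry Ω y ^ β)
                * ((Metric.ball y (distBdry Ω y / 9))ᶜ).indicator
                    (fun x => ENNReal.ofReal (dist x y ^ (-((d : ℝ) + 2 * s)))) x :=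
              lintegral_mono hptw
          _ = ENNReal.ofReal (2 * u y ^ 2 * distBdry Ω y ^ β)
                * ∫⁻ x in (Metric.ball y (distBdry Ω y / 9))ᶜ,
                    ENNReal.ofReal (dist x y ^ (-((d : ℝ) + 2 * s))) := by
              rw [lintegral_const_mul _ ((((measurable_id'.dist
                measurable_const).pow measurable_const).ennreal_ofReal).indicator
                measurableSet_ball.compl), lintegral_indicator measurableSet_ball.compl]
          _ ≤ ENNReal.ofReal (2 * u y ^ 2 * distBdry Ω y ^ β)
                * ENNReal.ofReal (Mc * (distBdry Ω y / 9) ^ (-(2 * s))) := by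
              refine mul_le_mul_right ?_ _
              have hr := radial_bound' hd hsS0 hss hs1 hρ y
              rw [hMcdef]
              exact hr
          _ ≤ ENNReal.ofReal (162 * Mc)
                * ENNReal.ofReal (u y ^ 2 * distBdry Ω y ^ (β - 2 * s)) := by
              have hfy : (0:ℝ) ≤ 2 * u y ^ 2 * distBdry Ω y ^ β :=
                mul_nonneg (by positivity) (Real.rpow_nonneg (hDnn y) β)
              rw [← ENNReal.ofReal_mul hfy, ← ENNReal.ofReal_mul (by linarith : (0:ℝ) ≤ 162 * Mc)]
              exact ENNReal.ofReal_le_ofReal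
                (arith' hMc hDy (sq_nonneg _) hs0 hs1 (by norm_num) (by norm_num))
          _ = ENNReal.ofReal (162 * Mc)
                * Ω.indicator (fun y => ENNReal.ofReal
                    (u y ^ 2 * distBdry Ω y ^ (β - 2 * s))) y := by
              rw [Set.indicator_of_mem hyΩ]
    · have h0 : ∀ x : Euc d, (Eset Ω).indicator (fun _ => (1:ℝ≥0∞)) (x, y) = 0 := fun x =>
        Set.indicator_of_notMem (fun hxy => hyΩ (mem_Eset.1 hxy).2.1) _
      simp only [h0, zero_mul, lintegral_zero]
      exact zero_le
  have hB : (∫⁻ x in Ω, ∫⁻ y, (Eset Ω).indicator (fun _ => (1:ℝ≥0∞)) (x, y)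
        * (ENNReal.ofReal (2 * u y ^ 2 * distBdry Ω y ^ β)
            * ENNReal.ofReal (‖x - y‖ ^ (-((d : ℝ) + 2 * s)))))
      ≤ ENNReal.ofReal (162 * Mc)
          * ∫⁻ x in Ω, ENNReal.ofReal (u x ^ 2 * distBdry Ω x ^ (β - 2 * s)) := by
    calc (∫⁻ x in Ω, ∫⁻ y, (Eset Ω).indicator (fun _ => (1:ℝ≥0∞)) (x, y)
          * (ENNReal.ofReal (2 * u y ^ 2 * distBdry Ω y ^ β)
              * ENNReal.ofReal (‖x - y‖ ^ (-((d : ℝ) + 2 * s)))))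
        ≤ ∫⁻ x, ∫⁻ y, (Eset Ω).indicator (fun _ => (1:ℝ≥0∞)) (x, y)
            * (ENNReal.ofReal (2 * u y ^ 2 * distBdry Ω y ^ β)
                * ENNReal.ofReal (‖x - y‖ ^ (-((d : ℝ) + 2 * s)))) :=
          setLIntegral_le_lintegral _ _
      _ = ∫⁻ y, ∫⁻ x, (Eset Ω).indicator (fun _ => (1:ℝ≥0∞)) (x, y)
            * (ENNReal.ofReal (2 * u y ^ 2 * distBdry Ω y ^ β)
                * ENNReal.ofReal (‖x - y‖ ^ (-((d : ℝ) + 2 * s)))) :=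
          lintegral_lintegral_swap mFB.aemeasurable
      _ ≤ ∫⁻ y, ENNReal.ofReal (162 * Mc)
            * Ω.indicator (fun y => ENNReal.ofReal
                (u y ^ 2 * distBdry Ω y ^ (β - 2 * s))) y := lintegral_mono hyB
      _ = ENNReal.ofReal (162 * Mc)
            * ∫⁻ y, Ω.indicator (fun y => ENNReal.ofReal
                (u y ^ 2 * distBdry Ω y ^ (β - 2 * s))) y :=
          lintegral_const_mul _ (mg.indicator hΩo.measurableSet)
      _ = ENNReal.ofReal (162 * Mc)
            * ∫⁻ x in Ω, ENNReal.ofReal (u x ^ 2 * distBdry Ω x ^ (β - 2 * s)) := by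
          rw [lintegral_indicator hΩo.measurableSet]
  -- Put everything together
  rw [hL]
  calc (∫⁻ x in Ω, ∫⁻ y, (Eset Ω).indicator (fun _ => (1:ℝ≥0∞)) (x, y) * ENNReal.ofReal
          (min (distBdry Ω x) (distBdry Ω y) ^ β * (u x - u y) ^ 2
            * ‖x - y‖ ^ (-((d : ℝ) + 2 * s))))
      ≤ ∫⁻ x in Ω, ∫⁻ y,
          ((Eset Ω).indicator (fun _ => (1:ℝ≥0∞)) (x, y)
            * (ENNReal.ofReal (2 * u x ^ 2 * distBdry Ω x ^ β)
                * ENNReal.ofReal (‖x - y‖ ^ (-((d : ℝ) + 2 * s))))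
          + (Eset Ω).indicator (fun _ => (1:ℝ≥0∞)) (x, y)
            * (ENNReal.ofReal (2 * u y ^ 2 * distBdry Ω y ^ β)
                * ENNReal.ofReal (‖x - y‖ ^ (-((d : ℝ) + 2 * s))))) := by
        refine lintegral_mono fun x => lintegral_mono fun y => ?_
        rw [← mul_add]
        refine mul_le_mul_right ?_ _
        rw [← add_mul]
        calc ENNReal.ofReal (min (distBdry Ω x) (distBdry Ω y) ^ β * (u x - u y) ^ 2
              * ‖x - y‖ ^ (-((d : ℝ) + 2 * s)))
            ≤ ENNReal.ofReal ((2 * u x ^ 2 * distBdry Ω x ^ β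
                + 2 * u y ^ 2 * distBdry Ω y ^ β) * ‖x - y‖ ^ (-((d : ℝ) + 2 * s))) :=
              ENNReal.ofReal_le_ofReal (mul_le_mul_of_nonneg_right
                (minsplit' (hDnn x) (hDnn y) hβ.le)
                (Real.rpow_nonneg (norm_nonneg _) _))
          _ = (ENNReal.ofReal (2 * u x ^ 2 * distBdry Ω x ^ β)
                + ENNReal.ofReal (2 * u y ^ 2 * distBdry Ω y ^ β))
                * ENNReal.ofReal (‖x - y‖ ^ (-((d : ℝ) + 2 * s))) := by
              have hfx : (0:ℝ) ≤ 2 * u x ^ 2 * distBdry Ω x ^ β :=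
                mul_nonneg (by positivity) (Real.rpow_nonneg (hDnn x) β)
              have hfy : (0:ℝ) ≤ 2 * u y ^ 2 * distBdry Ω y ^ β :=
                mul_nonneg (by positivity) (Real.rpow_nonneg (hDnn y) β)
              rw [ENNReal.ofReal_mul (add_nonneg hfx hfy), ENNReal.ofReal_add hfx hfy]
    _ = (∫⁻ x in Ω, ∫⁻ y, (Eset Ω).indicator (fun _ => (1:ℝ≥0∞)) (x, y)
            * (ENNReal.ofReal (2 * u x ^ 2 * distBdry Ω x ^ β)
                * ENNReal.ofReal (‖x - y‖ ^ (-((d : ℝ) + 2 * s)))))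
        + ∫⁻ x in Ω, ∫⁻ y, (Eset Ω).indicator (fun _ => (1:ℝ≥0∞)) (x, y)
            * (ENNReal.ofReal (2 * u y ^ 2 * distBdry Ω y ^ β)
                * ENNReal.ofReal (‖x - y‖ ^ (-((d : ℝ) + 2 * s)))) := by
        have hinner : ∀ x : Euc d, (∫⁻ y,
            ((Eset Ω).indicator (fun _ => (1:ℝ≥0∞)) (x, y)
              * (ENNReal.ofReal (2 * u x ^ 2 * distBdry Ω x ^ β)
                  * ENNReal.ofReal (‖x - y‖ ^ (-((d : ℝ) + 2 * s))))
            + (Eset Ω).indicator (fun _ => (1:ℝ≥0∞)) (x, y)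
              * (ENNReal.ofReal (2 * u y ^ 2 * distBdry Ω y ^ β)
                  * ENNReal.ofReal (‖x - y‖ ^ (-((d : ℝ) + 2 * s))))))
            = (∫⁻ y, (Eset Ω).indicator (fun _ => (1:ℝ≥0∞)) (x, y)
              * (ENNReal.ofReal (2 * u x ^ 2 * distBdry Ω x ^ β)
                  * ENNReal.ofReal (‖x - y‖ ^ (-((d : ℝ) + 2 * s)))))
            + ∫⁻ y, (Eset Ω).indicator (fun _ => (1:ℝ≥0∞)) (x, y)
              * (ENNReal.ofReal (2 * u y ^ 2 * distBdry Ω y ^ β)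
                  * ENNReal.ofReal (‖x - y‖ ^ (-((d : ℝ) + 2 * s)))) := fun x =>
          lintegral_add_left (mFA.comp (measurable_prodMk_left)) _
        rw [lintegral_congr hinner]
        exact lintegral_add_left mFA.lintegral_prod_right' _
    _ ≤ ENNReal.ofReal (162 * Mc)
          * (∫⁻ x in Ω, ENNReal.ofReal (u x ^ 2 * distBdry Ω x ^ (β - 2 * s)))
        + ENNReal.ofReal (162 * Mc)
          * ∫⁻ x in Ω, ENNReal.ofReal (u x ^ 2 * distBdry Ω x ^ (β - 2 * s)) :=
        add_le_add hA hB
    _ ≤ ENNReal.ofReal (324 * Mc + 1)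
          * ∫⁻ x in Ω, ENNReal.ofReal (u x ^ 2 * distBdry Ω x ^ (β - 2 * s)) := by
        rw [← add_mul, ← ENNReal.ofReal_add (by linarith) (by linarith)]
        exact mul_le_mul_left (ENNReal.ofReal_le_ofReal (by linarith)) _
end
end

section
/- Let d ≥ 1, let Ω ⊂ ℝ^d be a bounded open set, and let μ be a finite measure on 𝕊^{d-1} with μ(𝕊^{d-1}) ≤ Λ. There exists a constant C ≥ 1 depending only on Ω and Λ such that for every s ∈ (0,1), every K > 0, and every φ : ℝ^d → ℝ with φ = 0 on Ω^c and |φ(x)| ≤ K d_x^s for all x ∈ Ω, one has |N_s(φ)(x)| ≤ (C K / s) τ_s(x) for every x outside the closure of Ω. -/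
open MeasureTheory Metric Set Filter
open scoped ENNReal NNReal Topology

noncomputable section

lemma exists_frontier_dist_le {d : ℕ} {Ω : Set (Euc d)} {x y : Euc d}
    (hx : x ∈ Ωᶜ) (hy : y ∈ Ω) : ∃ z ∈ frontier Ω, dist x z ≤ dist x y := by
  have hΩne : Ω.Nonempty := ⟨y, hy⟩
  have hΩcne : Ωᶜ.Nonempty := ⟨x, hx⟩
  set h : ℝ → Euc d := fun a => x + a • (y - x) with hh
  have hcont : Continuous h := continuous_const.add (continuous_id.smul continuous_const)
  set ψ : ℝ → ℝ := fun a => Metric.infDist (h a) Ω - Metric.infDist (h a) Ωᶜ with hψdef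
  have hψc : ContinuousOn ψ (Icc 0 1) :=
    (((Metric.continuous_infDist_pt Ω).comp hcont).sub
      ((Metric.continuous_infDist_pt Ωᶜ).comp hcont)).continuousOn
  have h0 : h 0 = x := by simp [hh]
  have h1 : h 1 = y := by simp [hh]
  have hψ1 : ψ 1 ≤ 0 := by
    have : Metric.infDist (h 1) Ω = 0 := by rw [h1]; exact Metric.infDist_zero_of_mem hy
    have h2 := Metric.infDist_nonneg (x := h 1) (s := Ωᶜ)
    simp only [hψdef]; linarith
  have hψ0 : 0 ≤ ψ 0 := by
    have : Metric.infDist (h 0) Ωᶜ = 0 := by rw [h0]; exact Metric.infDist_zero_of_mem hx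
    have h2 := Metric.infDist_nonneg (x := h 0) (s := Ω)
    simp only [hψdef]; linarith
  have hmem : (0:ℝ) ∈ Icc (ψ 1) (ψ 0) := ⟨hψ1, hψ0⟩
  obtain ⟨a, ha, hψa⟩ := intermediate_value_Icc' (by norm_num : (0:ℝ) ≤ 1) hψc hmem
  have hboth : Metric.infDist (h a) Ω = 0 ∧ Metric.infDist (h a) Ωᶜ = 0 := by
    have hsub : Metric.infDist (h a) Ω - Metric.infDist (h a) Ωᶜ = 0 := hψa
    rcases em (h a ∈ Ω) with hm | hm
    · have e1 : Metric.infDist (h a) Ω = 0 := Metric.infDist_zero_of_mem hm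
      exact ⟨e1, by linarith⟩
    · have e1 : Metric.infDist (h a) Ωᶜ = 0 := Metric.infDist_zero_of_mem hm
      exact ⟨by linarith, e1⟩
  have hz : h a ∈ frontier Ω := by
    rw [frontier_eq_closure_inter_closure]
    exact ⟨(Metric.mem_closure_iff_infDist_zero hΩne).2 hboth.1,
      (Metric.mem_closure_iff_infDist_zero hΩcne).2 hboth.2⟩
  refine ⟨h a, hz, ?_⟩
  have hdist : dist x (h a) = a * dist x y := by
    have : x - (x + a • (y - x)) = -(a • (y - x)) := by abel
    rw [dist_eq_norm, hh, this, norm_neg, norm_smul, Real.norm_eq_abs,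
      abs_of_nonneg ha.1, dist_eq_norm, norm_sub_rev]
  rw [hdist]
  calc a * dist x y ≤ 1 * dist x y := by
        exact mul_le_mul_of_nonneg_right ha.2 dist_nonneg
    _ = dist x y := one_mul _

set_option maxHeartbeats 2000000 in
/-- nonlocal normal derivative bound for functions dominated by `d_x^s`:
`|N_s(φ)(x)| ≤ (CK/s) τ_s(x)` outside `closure Ω`. -/
theorem statement16 {d : ℕ} (hd : 1 ≤ d) (Ω : Set (Euc d)) (hΩo : IsOpen Ω)
    (hΩb : Bornology.IsBounded Ω) (μ : Measure (Sph d)) (Λ : ℝ) (hΛ : 0 < Λ)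
    (hμfin : μ Set.univ ≤ ENNReal.ofReal Λ) :
    ∃ C : ℝ, 1 ≤ C ∧ ∀ s ∈ Set.Ioo (0 : ℝ) 1, ∀ K : ℝ, 0 < K → ∀ φ : Euc d → ℝ,
      (∀ x ∈ Ωᶜ, φ x = 0) → (∀ x ∈ Ω, |φ x| ≤ K * distBdry Ω x ^ s) →
      ∀ x ∉ closure Ω, |Ns Ω μ s φ x| ≤ C * K / s * tauWt Ω μ s x := by
  classical
  haveI : IsFiniteMeasure μ :=
    ⟨lt_of_le_of_lt (le_trans (measure_mono (subset_univ _)) hμfin) ENNReal.ofReal_lt_top⟩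
  obtain ⟨R, hR1, hΩR⟩ : ∃ R : ℝ, 1 ≤ R ∧ Ω ⊆ Metric.closedBall 0 R := by
    obtain ⟨R, hR⟩ := hΩb.subset_closedBall (0 : Euc d)
    exact ⟨max R 1, le_max_right _ _,
      hR.trans (Metric.closedBall_subset_closedBall (le_max_left _ _))⟩
  set D : ℝ := 2 * R with hD
  have hD1 : (1 : ℝ) ≤ D := by simp only [hD]; linarith
  refine ⟨2 * Λ + 8 * D + 1, by nlinarith, ?_⟩
  rintro s ⟨hs0, hs1⟩ K hK φ hφ0 hφb x hx
  have hC0 : (0 : ℝ) ≤ 2 * Λ + 8 * D + 1 := by nlinarith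
  have hs1' : (0 : ℝ) ≤ 1 - s := by linarith
  have hxΩc : x ∈ Ωᶜ := fun h => hx (subset_closure h)
  have hφx : φ x = 0 := hφ0 x hxΩc
  set t := distBdry Ω x with ht
  set I : ℝ := ({y | y ∈ Ωᶜ ∧ distBdry Ω y < 1} ∩
      closure (Function.support (nuStar Ω μ s))).indicator (fun _ => (1 : ℝ)) x with hI
  have hInn : 0 ≤ I := Set.indicator_nonneg (fun _ _ => zero_le_one) x
  have htau : tauWt Ω μ s x = (1 - s) * t ^ (-s) * I + nuStar Ω μ s x := rfl
  set slc : ℝ → Set (Sph d) := fun r => {θ : Sph d | x + r • (θ : Euc d) ∈ Ω} with hslc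
  have hslcm : ∀ r, MeasurableSet (slc r) :=
    fun r => (hΩo.measurableSet).preimage
      ((continuous_const.add (continuous_subtype_val.const_smul r)).measurable)
  have hslcΛ : ∀ r, (μ (slc r)).toReal ≤ Λ := fun r =>
    ENNReal.toReal_le_of_le_ofReal hΛ.le ((measure_mono (subset_univ _)).trans hμfin)
  set c : ℝ → ℝ := fun r => (1 + |r|) ^ (-1 - 2 * s) with hc
  have hcpos : ∀ r, 0 < c r := fun r => Real.rpow_pos_of_pos (by positivity) _
  set g : ℝ → ℝ := fun r => (μ (slc r)).toReal * c r with hg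
  have hgnn : ∀ r, 0 ≤ g r := fun r => mul_nonneg ENNReal.toReal_nonneg (hcpos r).le
  have hinner : ∀ r : ℝ,
      (∫ θ : Sph d, Ω.indicator (fun _ => (1:ℝ)) (x + r • (θ : Euc d)) * c r ∂μ) = g r := by
    intro r
    have heq : (fun θ : Sph d => Ω.indicator (fun _ => (1:ℝ)) (x + r • (θ : Euc d)) * c r)
        = (slc r).indicator (fun _ => c r) := by
      funext θ
      simp only [Set.indicator_apply]
      by_cases hθ : x + r • (θ : Euc d) ∈ Ω
      · rw [if_pos hθ, if_pos (show θ ∈ slc r from hθ), one_mul]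
      · rw [if_neg hθ, if_neg (show θ ∉ slc r from hθ), zero_mul]
    rw [heq, integral_indicator_const _ (hslcm r), smul_eq_mul, hg]; rfl
  have hnuF : nuStar Ω μ s x = (1 - s) * ∫ r : ℝ, g r := by
    unfold nuStar
    congr 1
    exact integral_congr_ae (Eventually.of_forall fun r => hinner r)
  have hSmeas : MeasurableSet {p : ℝ × Sph d | x + p.1 • (p.2 : Euc d) ∈ Ω} :=
    (hΩo.measurableSet).preimage
      ((continuous_const.add
        (continuous_fst.smul (continuous_subtype_val.comp continuous_snd))).measurable)
  have hmeasμ : Measurable fun r => μ (slc r) := measurable_measure_prodMk_left hSmeas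
  have hccont : Continuous c := by
    apply Continuous.rpow_const (continuous_const.add continuous_abs)
    intro r; left; exact (by positivity : (0:ℝ) < 1 + |r|).ne'
  have hgmeas : Measurable g := hmeasμ.ennreal_toReal.mul hccont.measurable
  have hcint : Integrable c := by
    have h := integrable_one_add_norm (E := ℝ) (μ := volume) (r := 1 + 2*s)
      (by simp only [Module.finrank_self]; push_cast; linarith)
    simpa only [Real.norm_eq_abs, show -(1+2*s) = -1-2*s from by ring] using h
  have hgint : Integrable g := by
    refine (hcint.const_mul Λ).mono' hgmeas.aestronglyMeasurable
      (Eventually.of_forall fun r => ?_)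
    rw [Real.norm_eq_abs, abs_of_nonneg (hgnn r)]
    exact mul_le_mul_of_nonneg_right (hslcΛ r) (hcpos r).le
  have hgint_nn : 0 ≤ ∫ r : ℝ, g r := integral_nonneg hgnn
  have hnu_nn : 0 ≤ nuStar Ω μ s x := by
    rw [hnuF]; exact mul_nonneg hs1' hgint_nn
  have htn : (0:ℝ) ≤ t ^ (-s) := Real.rpow_nonneg Metric.infDist_nonneg _
  have htau_nn : 0 ≤ tauWt Ω μ s x := by
    rw [htau]
    exact add_nonneg (mul_nonneg (mul_nonneg hs1' htn) hInn) hnu_nn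
  have hRHS_nn : 0 ≤ (2 * Λ + 8 * D + 1) * K / s * tauWt Ω μ s x :=
    mul_nonneg (div_nonneg (mul_nonneg hC0 hK.le) hs0.le) htau_nn
  by_cases hν0 : nuStar Ω μ s x = 0
  · -- degenerate case : Ns = 0
    have hint0 : ∫ r : ℝ, g r = 0 := by
      rw [hnuF] at hν0
      rcases mul_eq_zero.1 hν0 with h | h
      · exfalso; linarith
      · exact h
    have hg0 : ∀ᵐ r : ℝ, g r = 0 := by
      have h2 := (integral_eq_zero_iff_of_nonneg (fun r => hgnn r) hgint).1 hint0
      filter_upwards [h2] with r hr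
      simpa using hr
    have hF0 : ∀ᵐ r : ℝ, (∫ θ : Sph d, Ω.indicator (fun _ => (1:ℝ)) (x + r • (θ : Euc d))
        * (φ x - φ (x + r • (θ : Euc d))) * |r| ^ (-1 - 2 * s) ∂μ) = 0 := by
      filter_upwards [hg0] with r hr
      have hμ0 : μ (slc r) = 0 := by
        have h1 : (μ (slc r)).toReal = 0 := by
          by_contra hne
          exact hne (by
            have := mul_eq_zero.1 hr
            rcases this with h | h
            · exact h
            · exact absurd h (hcpos r).ne')
        exact ((ENNReal.toReal_eq_zero_iff _).1 h1).resolve_right (measure_ne_top μ _)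
      apply integral_eq_zero_of_ae
      filter_upwards [measure_eq_zero_iff_ae_notMem.1 hμ0] with θ hθ
      rw [Set.indicator_of_notMem (by exact hθ), zero_mul, zero_mul]
      simp
    have hNs0 : Ns Ω μ s φ x = 0 := by
      unfold Ns
      rw [integral_eq_zero_of_ae hF0, mul_zero]
    rw [hNs0, abs_zero]
    exact hRHS_nn
  · -- main case
    have hΩne : Ω.Nonempty := by
      by_contra hne
      rw [not_nonempty_iff_eq_empty] at hne
      apply hν0
      rw [hnuF]
      have hz : ∀ r : ℝ, g r = 0 := by
        intro r
        have : slc r = ∅ := by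
          rw [hslc]; ext θ; simp [hne]
        rw [hg]
        simp [this]
      simp [hz]
    have hΩuniv : Ω ≠ univ := by
      intro h
      set p : Euc d := EuclideanSpace.single (⟨0, hd⟩ : Fin d) (R + 1) with hp
      have hpn : ‖p‖ = R + 1 := by
        rw [hp, EuclideanSpace.norm_single, Real.norm_eq_abs, abs_of_pos (by linarith)]
      have hmem := hΩR (h ▸ mem_univ p)
      rw [Metric.mem_closedBall, dist_zero_right, hpn] at hmem
      linarith
    have hfront : (frontier Ω).Nonempty := nonempty_frontier_iff.2 ⟨hΩne, hΩuniv⟩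
    have ht0 : 0 < t := by
      rw [ht, distBdry]
      have hxf : x ∉ frontier Ω := fun h => hx (frontier_subset_closure h)
      exact (IsClosed.notMem_iff_infDist_pos isClosed_frontier hfront).1 hxf
    -- geometry
    have hgeo : ∀ (r : ℝ) (θ : Sph d), x + r • (θ : Euc d) ∈ Ω →
        t ≤ |r| ∧ distBdry Ω (x + r • (θ : Euc d)) ≤ |r|
          ∧ distBdry Ω (x + r • (θ : Euc d)) ≤ D := by
      intro r θ hy
      set y := x + r • (θ : Euc d) with hydef
      have hθn : ‖(θ : Euc d)‖ = 1 := mem_sphere_zero_iff_norm.1 θ.2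
      have hdxy : dist x y = |r| := by
        rw [dist_eq_norm]
        have hxy : x - y = -(r • (θ : Euc d)) := by rw [hydef]; abel
        rw [hxy, norm_neg, norm_smul, Real.norm_eq_abs, hθn, mul_one]
      obtain ⟨z, hzf, hzd⟩ := exists_frontier_dist_le hxΩc hy
      have h1 : t ≤ |r| := by
        rw [ht, distBdry]
        exact (Metric.infDist_le_dist_of_mem hzf).trans (hzd.trans hdxy.le)
      have h2 : distBdry Ω y ≤ |r| := by
        obtain ⟨z', hz'f, hz'd⟩ := by
          have h := exists_frontier_dist_le (Ω := Ωᶜ) (x := y) (y := x)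
            (by simpa using hy) hxΩc
          rwa [frontier_compl] at h
        rw [distBdry]
        refine (Metric.infDist_le_dist_of_mem hz'f).trans (hz'd.trans ?_)
        rw [dist_comm, hdxy]
      have h3 : distBdry Ω y ≤ D := by
        obtain ⟨w, hw⟩ := hfront
        rw [distBdry]
        refine (Metric.infDist_le_dist_of_mem hw).trans ?_
        have hyR : ‖y‖ ≤ R := by
          have hm := hΩR hy; rwa [Metric.mem_closedBall, dist_zero_right] at hm
        have hwR : ‖w‖ ≤ R := by
          have hm : w ∈ Metric.closedBall (0 : Euc d) R :=
            closure_minimal hΩR Metric.isClosed_closedBall (frontier_subset_closure hw)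
          rwa [Metric.mem_closedBall, dist_zero_right] at hm
        calc dist y w = ‖y - w‖ := dist_eq_norm y w
          _ ≤ ‖y‖ + ‖w‖ := norm_sub_le y w
          _ ≤ D := by rw [hD]; linarith
      exact ⟨h1, h2, h3⟩
    -- pointwise bound functions
    set f1 : ℝ → ℝ := fun r => |r| ^ (-1 - s) with hf1
    have hf1nn : ∀ r : ℝ, 0 ≤ f1 r := fun r => Real.rpow_nonneg (abs_nonneg r) _
    set G1 : ℝ → ℝ := fun r =>
      K * Λ * ((Icc t 1).indicator f1 r + (Icc (-1) (-t)).indicator f1 r) with hG1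
    set G2 : ℝ → ℝ := fun r => 8 * K * D * g r with hG2
    have hKΛ : (0:ℝ) ≤ K * Λ := mul_nonneg hK.le hΛ.le
    have hG1nn : ∀ r : ℝ, 0 ≤ G1 r := by
      intro r
      have h1 : 0 ≤ (Icc t 1).indicator f1 r := Set.indicator_nonneg (fun u _ => hf1nn u) r
      have h2 : 0 ≤ (Icc (-1) (-t)).indicator f1 r := Set.indicator_nonneg (fun u _ => hf1nn u) r
      exact mul_nonneg hKΛ (add_nonneg h1 h2)
    have hG2nn : ∀ r : ℝ, 0 ≤ G2 r := by
      intro r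
      have h8 : (0:ℝ) ≤ 8 * K * D :=
        mul_nonneg (mul_nonneg (by norm_num) hK.le) (le_trans zero_le_one hD1)
      exact mul_nonneg h8 (hgnn r)
    have hb : ∀ r : ℝ,
        ‖∫ θ : Sph d, Ω.indicator (fun _ => (1:ℝ)) (x + r • (θ : Euc d))
          * (φ x - φ (x + r • (θ : Euc d))) * |r| ^ (-1 - 2 * s) ∂μ‖ ≤ G1 r + G2 r := by
      intro r
      set b : ℝ := if |r| ≤ 1 then |r| ^ (-1 - s) else D * |r| ^ (-1 - 2 * s) with hbdef
      have step1 : ‖∫ θ : Sph d, Ω.indicator (fun _ => (1:ℝ)) (x + r • (θ : Euc d))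
          * (φ x - φ (x + r • (θ : Euc d))) * |r| ^ (-1 - 2 * s) ∂μ‖
          ≤ (μ (slc r)).toReal * (K * b) := by
        have hint : Integrable ((slc r).indicator (fun _ => K * b)) μ :=
          (integrable_const _).indicator (hslcm r)
        have hptw : ∀ θ : Sph d,
            ‖Ω.indicator (fun _ => (1:ℝ)) (x + r • (θ : Euc d))
              * (φ x - φ (x + r • (θ : Euc d))) * |r| ^ (-1 - 2 * s)‖
            ≤ (slc r).indicator (fun _ => K * b) θ := by
          intro θ
          by_cases hθ : x + r • (θ : Euc d) ∈ Ω
          · obtain ⟨hg1, hg2, hg3⟩ := hgeo r θ hθ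
            have hr0 : 0 < |r| := lt_of_lt_of_le ht0 hg1
            have hrpnn : (0:ℝ) ≤ |r| ^ (-1 - 2 * s) := Real.rpow_nonneg (abs_nonneg r) _
            rw [Set.indicator_of_mem hθ, Set.indicator_of_mem (show θ ∈ slc r from hθ),
              one_mul, hφx, zero_sub, Real.norm_eq_abs, abs_mul, abs_neg,
              abs_of_nonneg hrpnn]
            have hφy : |φ (x + r • (θ : Euc d))| ≤ K * distBdry Ω (x + r • (θ : Euc d)) ^ s :=
              hφb _ hθ
            have hdnn : 0 ≤ distBdry Ω (x + r • (θ : Euc d)) := Metric.infDist_nonneg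
            rcases le_or_gt |r| 1 with h1 | h1
            · have hds : distBdry Ω (x + r • (θ : Euc d)) ^ s ≤ |r| ^ s :=
                Real.rpow_le_rpow hdnn hg2 hs0.le
              have hbe : b = |r| ^ (-1 - s) := by rw [hbdef, if_pos h1]
              calc |φ (x + r • (θ : Euc d))| * |r| ^ (-1 - 2 * s)
                  ≤ (K * |r| ^ s) * |r| ^ (-1 - 2 * s) := by
                    refine mul_le_mul_of_nonneg_right (hφy.trans ?_) hrpnn
                    exact mul_le_mul_of_nonneg_left hds hK.le
                _ = K * b := by
                    rw [hbe, mul_assoc, ← Real.rpow_add hr0]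
                    ring_nf
            · have hds : distBdry Ω (x + r • (θ : Euc d)) ^ s ≤ D := by
                  calc distBdry Ω (x + r • (θ : Euc d)) ^ s ≤ D ^ s :=
                        Real.rpow_le_rpow hdnn hg3 hs0.le
                    _ ≤ D ^ (1:ℝ) := Real.rpow_le_rpow_of_exponent_le hD1 hs1.le
                    _ = D := Real.rpow_one D
              have hbe : b = D * |r| ^ (-1 - 2 * s) := by rw [hbdef, if_neg (not_le.2 h1)]
              calc |φ (x + r • (θ : Euc d))| * |r| ^ (-1 - 2 * s)
                  ≤ (K * D) * |r| ^ (-1 - 2 * s) := by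
                    refine mul_le_mul_of_nonneg_right (hφy.trans ?_) hrpnn
                    exact mul_le_mul_of_nonneg_left hds hK.le
                _ = K * b := by rw [hbe]; ring
          · rw [Set.indicator_of_notMem hθ,
              Set.indicator_of_notMem (show θ ∉ slc r from hθ), zero_mul, zero_mul, norm_zero]
        refine le_trans (norm_integral_le_of_norm_le hint (Eventually.of_forall hptw)) ?_
        rw [integral_indicator_const _ (hslcm r), smul_eq_mul]; exact le_rfl
      refine step1.trans ?_
      rcases le_or_gt |r| 1 with h1 | h1
      · rw [show b = |r| ^ (-1 - s) from by rw [hbdef, if_pos h1]]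
        by_cases hμr : μ (slc r) = 0
        · rw [hμr]
          simp only [ENNReal.toReal_zero, zero_mul]
          exact add_nonneg (hG1nn r) (hG2nn r)
        · obtain ⟨θ, hθ⟩ := nonempty_of_measure_ne_zero hμr
          have hg1 := (hgeo r θ hθ).1
          have hrIcc : r ∈ Icc t 1 ∨ r ∈ Icc (-1) (-t) := by
            rcases le_or_gt 0 r with hr | hr
            · left
              rw [abs_of_nonneg hr] at hg1 h1
              exact ⟨hg1, h1⟩
            · right
              rw [abs_of_neg hr] at hg1 h1
              exact ⟨by linarith, by linarith⟩
          have hG1ge : K * Λ * f1 r ≤ G1 r := by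
            simp only [hG1]
            rcases hrIcc with hm | hm
            · have h2 : 0 ≤ (Icc (-1) (-t)).indicator f1 r :=
                Set.indicator_nonneg (fun u _ => hf1nn u) r
              rw [Set.indicator_of_mem hm]
              exact mul_le_mul_of_nonneg_left (le_add_of_nonneg_right h2) hKΛ
            · have h2 : 0 ≤ (Icc t 1).indicator f1 r :=
                Set.indicator_nonneg (fun u _ => hf1nn u) r
              rw [Set.indicator_of_mem hm]
              exact mul_le_mul_of_nonneg_left (le_add_of_nonneg_left h2) hKΛ
          calc (μ (slc r)).toReal * (K * |r| ^ (-1 - s))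
              ≤ Λ * (K * |r| ^ (-1 - s)) := by
                refine mul_le_mul_of_nonneg_right (hslcΛ r) ?_
                exact mul_nonneg hK.le (Real.rpow_nonneg (abs_nonneg r) _)
            _ = K * Λ * f1 r := by simp only [hf1]; ring
            _ ≤ G1 r := hG1ge
            _ ≤ G1 r + G2 r := le_add_of_nonneg_right (hG2nn r)
      · rw [show b = D * |r| ^ (-1 - 2 * s) from by rw [hbdef, if_neg (not_le.2 h1)]]
        have hA : (0:ℝ) ≤ |r| ^ (-1 - 2 * s) := Real.rpow_nonneg (abs_nonneg r) _
        have hkey : |r| ^ (-1 - 2 * s) ≤ 8 * c r := by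
          have h2r : (0:ℝ) < |r| := lt_trans one_pos h1
          have hle : 1 + |r| ≤ 2 * |r| := by linarith
          have e1 : (2 * |r|) ^ (-1 - 2 * s) ≤ (1 + |r|) ^ (-1 - 2 * s) :=
            Real.rpow_le_rpow_of_nonpos (by positivity) hle (by linarith)
          have e2 : (2 * |r|) ^ (-1 - 2 * s) = 2 ^ (-1 - 2 * s) * |r| ^ (-1 - 2 * s) :=
            Real.mul_rpow (by norm_num) (abs_nonneg r)
          have e3 : (1:ℝ) ≤ 8 * 2 ^ (-1 - 2 * s) := by
            have h4 : (2:ℝ) ^ (-3:ℝ) ≤ 2 ^ (-1 - 2 * s) :=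
              Real.rpow_le_rpow_of_exponent_le one_le_two (by linarith)
            have h5 : (2:ℝ) ^ (-3:ℝ) = 1 / 8 := by
              rw [show (-3:ℝ) = ((-3:ℤ):ℝ) by norm_num, Real.rpow_intCast]
              norm_num
            rw [h5] at h4
            linarith
          calc |r| ^ (-1 - 2 * s) = 1 * |r| ^ (-1 - 2 * s) := (one_mul _).symm
            _ ≤ (8 * 2 ^ (-1 - 2 * s)) * |r| ^ (-1 - 2 * s) :=
                mul_le_mul_of_nonneg_right e3 hA
            _ = 8 * ((2 * |r|) ^ (-1 - 2 * s)) := by rw [e2]; ring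
            _ ≤ 8 * c r := by
                simp only [hc]
                linarith
        calc (μ (slc r)).toReal * (K * (D * |r| ^ (-1 - 2 * s)))
            ≤ (μ (slc r)).toReal * (K * (D * (8 * c r))) := by
              refine mul_le_mul_of_nonneg_left ?_ ENNReal.toReal_nonneg
              refine mul_le_mul_of_nonneg_left ?_ hK.le
              exact mul_le_mul_of_nonneg_left hkey (le_trans zero_le_one hD1)
          _ = G2 r := by simp only [hG2, hg]; ring
          _ ≤ G1 r + G2 r := le_add_of_nonneg_left (hG1nn r)
    -- integrability of G1, G2
    have hf1c : ∀ a b' : ℝ, (∀ u ∈ Icc a b', u ≠ 0) → IntegrableOn f1 (Icc a b') := by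
      intro a b' h
      apply ContinuousOn.integrableOn_compact isCompact_Icc
      apply ContinuousOn.rpow_const continuous_abs.continuousOn
      intro u hu
      exact Or.inl (abs_ne_zero.2 (h u hu))
    have hi1 : IntegrableOn f1 (Icc t 1) :=
      hf1c t 1 (fun u hu => ne_of_gt (lt_of_lt_of_le ht0 hu.1))
    have hi2 : IntegrableOn f1 (Icc (-1) (-t)) :=
      hf1c (-1) (-t) (fun u hu => ne_of_lt (lt_of_le_of_lt hu.2 (by linarith)))
    have hG1int : Integrable G1 := by
      simp only [hG1]
      exact ((hi1.integrable_indicator measurableSet_Icc).add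
        (hi2.integrable_indicator measurableSet_Icc)).const_mul _
    have hG2int : Integrable G2 := by
      simp only [hG2]
      exact hgint.const_mul _
    have hsumint : Integrable (fun r : ℝ => G1 r + G2 r) := hG1int.add hG2int
    have hNs : |Ns Ω μ s φ x| ≤ (1 - s) * ((∫ r : ℝ, G1 r) + (∫ r : ℝ, G2 r)) := by
      unfold Ns
      rw [abs_mul, abs_of_nonneg hs1']
      refine mul_le_mul_of_nonneg_left ?_ hs1'
      have step := norm_integral_le_of_norm_le (μ := volume) hsumint
        (Eventually.of_forall hb)
      rw [← integral_add hG1int hG2int]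
      simpa [Real.norm_eq_abs] using step
    have hG2val : (1 - s) * ∫ r : ℝ, G2 r = 8 * K * D * nuStar Ω μ s x := by
      rw [hnuF]
      simp only [hG2]
      rw [integral_const_mul]
      ring
    have hIcase : t < 1 → I = 1 := by
      intro ht1
      rw [hI]
      have hxmem : x ∈ ({y | y ∈ Ωᶜ ∧ distBdry Ω y < 1} ∩
          closure (Function.support (nuStar Ω μ s))) :=
        ⟨⟨hxΩc, ht1⟩, subset_closure (Function.mem_support.2 hν0)⟩
      exact Set.indicator_of_mem hxmem _
    set A : ℝ := ∫ r : ℝ, (Icc t 1).indicator f1 r with hAdef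
    have hA_nn : 0 ≤ A :=
      integral_nonneg (fun r => Set.indicator_nonneg (fun u _ => hf1nn u) r)
    have hposint : t < 1 → A ≤ t ^ (-s) / s := by
      intro ht1
      rw [hAdef, integral_indicator measurableSet_Icc]
      have hcong : EqOn f1 (fun u : ℝ => u ^ (-1 - s)) (Icc t 1) := by
        intro u hu
        simp only [hf1]
        rw [abs_of_pos (lt_of_lt_of_le ht0 hu.1)]
      rw [setIntegral_congr_fun measurableSet_Icc hcong]
      rw [MeasureTheory.integral_Icc_eq_integral_Ioc, ← intervalIntegral.integral_of_le ht1.le]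
      rw [integral_rpow (Or.inr ⟨by linarith, by
        rw [Set.uIcc_of_le ht1.le]
        intro hc
        exact absurd hc.1 (not_le.2 ht0)⟩)]
      have he : -1 - s + 1 = -s := by ring
      rw [he, Real.one_rpow]
      have hfe : (1 - t ^ (-s)) / (-s) = (t ^ (-s) - 1) / s := by
        rw [div_neg, ← neg_div, neg_sub]
      rw [hfe]
      exact (div_le_div_iff_of_pos_right hs0).2 (by linarith)
    have hnegint : (∫ r : ℝ, (Icc (-1) (-t)).indicator f1 r) = A := by
      have heq : (fun r : ℝ => (Icc t 1).indicator f1 (-r)) = (Icc (-1) (-t)).indicator f1 := by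
        funext r
        by_cases hm : r ∈ Icc (-1) (-t)
        · have hm2 : -r ∈ Icc t 1 := ⟨by linarith [hm.2], by linarith [hm.1]⟩
          rw [Set.indicator_of_mem hm2, Set.indicator_of_mem hm]
          simp only [hf1, abs_neg]
        · have hm2 : -r ∉ Icc t 1 := fun hc => hm ⟨by linarith [hc.2], by linarith [hc.1]⟩
          rw [Set.indicator_of_notMem hm2, Set.indicator_of_notMem hm]
      rw [← heq, hAdef]
      exact integral_neg_eq_self _ _
    have hints : ∫ r : ℝ, G1 r = K * Λ * (A + A) := by
      simp only [hG1]
      rw [integral_const_mul, integral_add (hi1.integrable_indicator measurableSet_Icc)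
        (hi2.integrable_indicator measurableSet_Icc), hnegint, hAdef]
    have hRHS1_nn : (0:ℝ) ≤ 2 * Λ * K / s * ((1 - s) * t ^ (-s) * I) :=
      mul_nonneg (div_nonneg (mul_nonneg (mul_nonneg (by norm_num) hΛ.le) hK.le) hs0.le)
        (mul_nonneg (mul_nonneg hs1' htn) hInn)
    have hG1val : (1 - s) * (∫ r : ℝ, G1 r) ≤ 2 * Λ * K / s * ((1 - s) * t ^ (-s) * I) := by
      rcases lt_or_ge t 1 with ht1 | ht1
      · rw [hIcase ht1, mul_one, hints]
        have hp := hposint ht1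
        have h2 : K * Λ * (A + A) ≤ K * Λ * (2 * (t ^ (-s) / s)) := by
          refine mul_le_mul_of_nonneg_left ?_ hKΛ
          linarith
        calc (1 - s) * (K * Λ * (A + A)) ≤ (1 - s) * (K * Λ * (2 * (t ^ (-s) / s))) :=
              mul_le_mul_of_nonneg_left h2 hs1'
          _ = 2 * Λ * K / s * ((1 - s) * t ^ (-s)) := by field_simp
      · have hz1 : A = 0 := by
          rw [hAdef]
          apply integral_eq_zero_of_ae
          have hvol : volume (Icc t 1) = 0 := by
            rw [Real.volume_Icc]
            exact ENNReal.ofReal_eq_zero.2 (by linarith)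
          filter_upwards [measure_eq_zero_iff_ae_notMem.1 hvol] with r hr
          rw [Set.indicator_of_notMem hr]
          simp
        rw [hints, hz1]
        simpa only [zero_add, mul_zero, add_zero] using hRHS1_nn
    have hcoef2 : (1 - s) * ∫ r : ℝ, G2 r ≤ (2 * Λ + 8 * D + 1) * K / s * nuStar Ω μ s x := by
      rw [hG2val]
      have hcoef : 8 * K * D ≤ (2 * Λ + 8 * D + 1) * K / s := by
        have e1 : 8 * K * D ≤ (2 * Λ + 8 * D + 1) * K := by nlinarith
        have e3 : (2 * Λ + 8 * D + 1) * K / 1 ≤ (2 * Λ + 8 * D + 1) * K / s :=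
          div_le_div_of_nonneg_left (mul_nonneg hC0 hK.le) hs0 hs1.le
        rw [div_one] at e3
        linarith
      exact mul_le_mul_of_nonneg_right hcoef hnu_nn
    have hcoef1 : 2 * Λ * K / s * ((1 - s) * t ^ (-s) * I)
        ≤ (2 * Λ + 8 * D + 1) * K / s * ((1 - s) * t ^ (-s) * I) := by
      refine mul_le_mul_of_nonneg_right ?_ (mul_nonneg (mul_nonneg hs1' htn) hInn)
      exact (div_le_div_iff_of_pos_right hs0).2 (by nlinarith)
    have hfinal := hNs
    rw [mul_add] at hfinal
    calc |Ns Ω μ s φ x| ≤ (1 - s) * (∫ r : ℝ, G1 r) + (1 - s) * ∫ r : ℝ, G2 r := hfinal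
      _ ≤ (2 * Λ + 8 * D + 1) * K / s * ((1 - s) * t ^ (-s) * I)
          + (2 * Λ + 8 * D + 1) * K / s * nuStar Ω μ s x :=
            add_le_add (hG1val.trans hcoef1) hcoef2
      _ = (2 * Λ + 8 * D + 1) * K / s * tauWt Ω μ s x := by rw [htau]; ring
end
end
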